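/- arXiv:2111.14312 — 4 statements merged into one kernel-verified Lean document; each statement's English description precedes it below -/
import Mathlib

section
/- The set BMO_ℝ^*(ℝ) of all real-valued BMO functions u on ℝ such that e^u is an A_∞-weight is convex: if u₁ and u₂ are real-valued BMO functions with e^{u₁} and e^{u₂} A_∞-weights and t ∈ [0,1], then e^{(1−t)u₁ + t u₂} is an A_∞-weight. -/
open MeasureTheory Set Filter Topology
open scoped ENNReal NNReal

noncomputable section

/-- The average of `u` over the interval from `a` to `b`. -/
noncomputable def intervalAvg {E : Type*} [NormedAddCommGroup E] [NormedSpace ℝ E]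
    (u : ℝ → E) (a b : ℝ) : E :=
  (b - a)⁻¹ • ∫ x in a..b, u x

/-- The BMO seminorm `‖u‖_* = sup_I (1/|I|) ∫_I ‖u - u_I‖`, valued in `ℝ≥0∞`. -/
noncomputable def bmoSeminorm {E : Type*} [NormedAddCommGroup E] [NormedSpace ℝ E]
    (u : ℝ → E) : ℝ≥0∞ :=
  ⨆ (a : ℝ) (b : ℝ) (_ : a < b),
    ENNReal.ofReal ((b - a)⁻¹ * ∫ x in a..b, ‖u x - intervalAvg u a b‖)

/-- `u` is a BMO function: locally integrable with finite BMO seminorm. -/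
def IsBMO {E : Type*} [NormedAddCommGroup E] [NormedSpace ℝ E] (u : ℝ → E) : Prop :=
  LocallyIntegrable u volume ∧ bmoSeminorm u < ⊤

/-- `ω` is an `A_p`-weight of Muckenhoupt on `ℝ` (`p > 1`). -/
def IsApWeight (ω : ℝ → ℝ) (p : ℝ) : Prop :=
  (∀ x, 0 ≤ ω x) ∧ LocallyIntegrable ω volume ∧
    LocallyIntegrable (fun x => (1 / ω x) ^ (1 / (p - 1))) volume ∧
    ∃ C : ℝ, 1 ≤ C ∧ ∀ a b : ℝ, a < b →
      ((b - a)⁻¹ * ∫ x in a..b, ω x) *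
        ((b - a)⁻¹ * ∫ x in a..b, (1 / ω x) ^ (1 / (p - 1))) ^ (p - 1) ≤ C

/-- `ω` is an `A_∞`-weight: an `A_p`-weight for some `p > 1`. -/
def IsAInftyWeight (ω : ℝ → ℝ) : Prop :=
  ∃ p : ℝ, 1 < p ∧ IsApWeight ω p

/-- `ω` is an `A_1`-weight of Muckenhoupt on `ℝ`. -/
def IsA1Weight (ω : ℝ → ℝ) : Prop :=
  (∀ x, 0 ≤ ω x) ∧ LocallyIntegrable ω volume ∧
    ∃ C : ℝ, 1 ≤ C ∧ ∀ a b : ℝ, a < b →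
      (b - a)⁻¹ * ∫ x in a..b, ω x ≤ C * essInf ω (volume.restrict (Set.Ioo a b))

/-- `f` is locally absolutely continuous with derivative `f'`. -/
def IsLocAC {E : Type*} [NormedAddCommGroup E] [NormedSpace ℝ E] (f f' : ℝ → E) : Prop :=
  LocallyIntegrable f' volume ∧ ∀ a b : ℝ, a < b → f b - f a = ∫ t in a..b, f' t

/-- `f` is a strongly quasisymmetric homeomorphism of `ℝ` with derivative `f'`:
an increasing homeomorphism of `ℝ` onto itself, locally absolutely continuous,
whose derivative is an `A_∞`-weight. -/
def IsSQSWith (f f' : ℝ → ℝ) : Prop :=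
  StrictMono f ∧ Function.Surjective f ∧ IsLocAC f f' ∧ IsAInftyWeight f'

/-- `f` is a strongly quasisymmetric homeomorphism of `ℝ` onto itself. -/
def IsSQS (f : ℝ → ℝ) : Prop :=
  ∃ f', IsSQSWith f f'

/-- `γ_u(x) = ∫_0^x e^{u(t)} dt`. -/
noncomputable def gammaOf (u : ℝ → ℝ) (x : ℝ) : ℝ :=
  ∫ t in (0:ℝ)..x, Real.exp (u t)

end

/-!
The classes `A_p` increase with `p`: for `p ≤ q` the dual weight `ω^{-1/(q-1)}` is the power
`(p-1)/(q-1) ≤ 1` of `ω^{-1/(p-1)}`, so Jensen's inequality on each interval bounds the `A_q`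
characteristic by the `A_p` one. Hence two `A_∞`-weights lie in a common `A_p`. There, Hölder's
inequality with exponents `1/(1-t)` and `1/t`, applied to the weights and to their dual weights,
gives `[ω₁^{1-t} ω₂^t]_{A_p} ≤ [ω₁]_{A_p}^{1-t} [ω₂]_{A_p}^t`, and
`e^{(1-t)u₁+tu₂} = (e^{u₁})^{1-t} (e^{u₂})^t`.
-/

open ProbabilityTheory

section Holder

variable {α : Type*} [MeasurableSpace α] {μ : Measure α} {f g : α → ℝ} {t : ℝ}

theorem MeasureTheory.Integrable.rpow_mul_rpow (hf : Integrable f μ) (hg : Integrable g μ)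
    (hf0 : ∀ x, 0 ≤ f x) (hg0 : ∀ x, 0 ≤ g x) (ht0 : 0 ≤ t) (ht1 : t ≤ 1) :
    Integrable (fun x => f x ^ (1 - t) * g x ^ t) μ := by
  refine ((hf.const_mul (1 - t)).add (hg.const_mul t)).mono'
    ((hf.aemeasurable.pow_const _).mul (hg.aemeasurable.pow_const _)).aestronglyMeasurable
    (ae_of_all _ fun x => ?_)
  rw [Real.norm_of_nonneg (by have := hf0 x; have := hg0 x; positivity)]
  exact Real.geom_mean_le_arith_mean2_weighted (by linarith) ht0 (hf0 x) (hg0 x) (by ring)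

theorem MeasureTheory.LocallyIntegrable.rpow_mul_rpow [TopologicalSpace α]
    (hf : LocallyIntegrable f μ) (hg : LocallyIntegrable g μ)
    (hf0 : ∀ x, 0 ≤ f x) (hg0 : ∀ x, 0 ≤ g x) (ht0 : 0 ≤ t) (ht1 : t ≤ 1) :
    LocallyIntegrable (fun x => f x ^ (1 - t) * g x ^ t) μ := fun x => by
  obtain ⟨s, hs, hfs⟩ := hf x
  obtain ⟨s', hs', hgs'⟩ := hg x
  exact ⟨s ∩ s', inter_mem hs hs', (hfs.mono_set inter_subset_left).rpow_mul_rpow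
    (hgs'.mono_set inter_subset_right) hf0 hg0 ht0 ht1⟩

theorem integral_rpow_mul_rpow_le (hf : Integrable f μ) (hg : Integrable g μ)
    (hf0 : ∀ x, 0 ≤ f x) (hg0 : ∀ x, 0 ≤ g x) (ht0 : 0 ≤ t) (ht1 : t ≤ 1) :
    ∫ x, f x ^ (1 - t) * g x ^ t ∂μ ≤ (∫ x, f x ∂μ) ^ (1 - t) * (∫ x, g x ∂μ) ^ t := by
  have hF : 0 ≤ ∫ x, f x ∂μ := integral_nonneg hf0
  have hG : 0 ≤ ∫ x, g x ∂μ := integral_nonneg hg0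
  rw [← ENNReal.ofReal_le_ofReal_iff (by positivity),
    ofReal_integral_eq_lintegral_ofReal (hf.rpow_mul_rpow hg hf0 hg0 ht0 ht1)
      (ae_of_all _ fun x => by have := hf0 x; have := hg0 x; positivity),
    ENNReal.ofReal_mul (by positivity), ← ENNReal.ofReal_rpow_of_nonneg hF (by linarith),
    ← ENNReal.ofReal_rpow_of_nonneg hG ht0, ofReal_integral_eq_lintegral_ofReal hf (ae_of_all _ hf0),
    ofReal_integral_eq_lintegral_ofReal hg (ae_of_all _ hg0)]
  calc ∫⁻ x, ENNReal.ofReal (f x ^ (1 - t) * g x ^ t) ∂μ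
      = ∫⁻ x, ENNReal.ofReal (f x) ^ (1 - t) * ENNReal.ofReal (g x) ^ t ∂μ :=
        lintegral_congr fun x => by
          rw [ENNReal.ofReal_mul (by have := hf0 x; positivity),
            ENNReal.ofReal_rpow_of_nonneg (hf0 x) (by linarith),
            ENNReal.ofReal_rpow_of_nonneg (hg0 x) ht0]
    _ ≤ _ := ENNReal.lintegral_mul_norm_pow_le hf.aemeasurable.ennreal_ofReal
        hg.aemeasurable.ennreal_ofReal (by linarith) ht0 (by ring)

theorem integral_rpow_le_rpow_integral [IsProbabilityMeasure μ] (hg : Integrable g μ)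
    (hg0 : ∀ x, 0 ≤ g x) (ht0 : 0 ≤ t) (ht1 : t ≤ 1) :
    ∫ x, g x ^ t ∂μ ≤ (∫ x, g x ∂μ) ^ t := by
  simpa using integral_rpow_mul_rpow_le (integrable_const 1) hg (fun _ => zero_le_one) hg0 ht0 ht1

end Holder

section Muckenhoupt

variable {α : Type*} {ω ω₁ ω₂ : α → ℝ} {p q t : ℝ}

noncomputable def dualWeight (ω : α → ℝ) (p : ℝ) (x : α) : ℝ :=
  (1 / ω x) ^ (1 / (p - 1))

theorem dualWeight_nonneg (hω0 : ∀ x, 0 ≤ ω x) (p : ℝ) (x : α) : 0 ≤ dualWeight ω p x :=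
  Real.rpow_nonneg (one_div_nonneg.2 (hω0 x)) _

theorem dualWeight_eq_rpow (hω0 : ∀ x, 0 ≤ ω x) (hp : p ≠ 1) (q : ℝ) :
    dualWeight ω q = fun x => dualWeight ω p x ^ ((p - 1) / (q - 1)) := by
  ext x
  have : p - 1 ≠ 0 := sub_ne_zero.2 hp
  rw [dualWeight, dualWeight, ← Real.rpow_mul (one_div_nonneg.2 (hω0 x))]
  congr 1
  field_simp

theorem dualWeight_rpow_mul_rpow (hω₁0 : ∀ x, 0 ≤ ω₁ x) (hω₂0 : ∀ x, 0 ≤ ω₂ x) (p t : ℝ) :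
    dualWeight (fun x => ω₁ x ^ (1 - t) * ω₂ x ^ t) p =
      fun x => dualWeight ω₁ p x ^ (1 - t) * dualWeight ω₂ p x ^ t := by
  ext x
  have h₁ := hω₁0 x
  have h₂ := hω₂0 x
  simp only [dualWeight, one_div]
  rw [mul_inv, ← Real.inv_rpow h₁, ← Real.inv_rpow h₂,
    Real.mul_rpow (by positivity) (by positivity), ← Real.rpow_mul (by positivity),
    ← Real.rpow_mul (by positivity), ← Real.rpow_mul (by positivity),
    ← Real.rpow_mul (by positivity), mul_comm (1 - t), mul_comm t]

variable [MeasurableSpace α] {μ : Measure α}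

noncomputable def apCharacteristic (μ : Measure α) (ω : α → ℝ) (p : ℝ) : ℝ :=
  (∫ x, ω x ∂μ) * (∫ x, dualWeight ω p x ∂μ) ^ (p - 1)

theorem apCharacteristic_nonneg (hω0 : ∀ x, 0 ≤ ω x) (μ : Measure α) (p : ℝ) :
    0 ≤ apCharacteristic μ ω p :=
  mul_nonneg (integral_nonneg hω0) (Real.rpow_nonneg (integral_nonneg (dualWeight_nonneg hω0 p)) _)

theorem apCharacteristic_le_of_le [IsProbabilityMeasure μ] (hω0 : ∀ x, 0 ≤ ω x)
    (hσ : Integrable (dualWeight ω p) μ) (hp : 1 < p) (hpq : p ≤ q) :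
    apCharacteristic μ ω q ≤ apCharacteristic μ ω p := by
  have hq : 1 < q := hp.trans_le hpq
  have hr0 : 0 ≤ (p - 1) / (q - 1) := div_nonneg (by linarith) (by linarith)
  have hr1 : (p - 1) / (q - 1) ≤ 1 := (div_le_one (by linarith)).2 (by linarith)
  have hσ0 : 0 ≤ ∫ x, dualWeight ω p x ∂μ := integral_nonneg (dualWeight_nonneg hω0 p)
  unfold apCharacteristic
  rw [dualWeight_eq_rpow hω0 hp.ne' q]
  calc (∫ x, ω x ∂μ) * (∫ x, dualWeight ω p x ^ ((p - 1) / (q - 1)) ∂μ) ^ (q - 1)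
      ≤ (∫ x, ω x ∂μ) * ((∫ x, dualWeight ω p x ∂μ) ^ ((p - 1) / (q - 1))) ^ (q - 1) := by
        refine mul_le_mul_of_nonneg_left (Real.rpow_le_rpow ?_ ?_ (by linarith))
          (integral_nonneg hω0)
        · exact integral_nonneg fun x => Real.rpow_nonneg (dualWeight_nonneg hω0 p x) _
        · exact integral_rpow_le_rpow_integral hσ (dualWeight_nonneg hω0 p) hr0 hr1
    _ = (∫ x, ω x ∂μ) * (∫ x, dualWeight ω p x ∂μ) ^ (p - 1) := by
        rw [← Real.rpow_mul hσ0, div_mul_cancel₀ _ (by linarith)]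

theorem apCharacteristic_rpow_mul_rpow_le (hω₁0 : ∀ x, 0 ≤ ω₁ x) (hω₂0 : ∀ x, 0 ≤ ω₂ x)
    (hω₁ : Integrable ω₁ μ) (hω₂ : Integrable ω₂ μ) (hσ₁ : Integrable (dualWeight ω₁ p) μ)
    (hσ₂ : Integrable (dualWeight ω₂ p) μ) (hp : 1 ≤ p) (ht0 : 0 ≤ t) (ht1 : t ≤ 1) :
    apCharacteristic μ (fun x => ω₁ x ^ (1 - t) * ω₂ x ^ t) p ≤
      apCharacteristic μ ω₁ p ^ (1 - t) * apCharacteristic μ ω₂ p ^ t := by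
  have hA := integral_rpow_mul_rpow_le hω₁ hω₂ hω₁0 hω₂0 ht0 ht1
  have hB : ∫ x, dualWeight (fun x => ω₁ x ^ (1 - t) * ω₂ x ^ t) p x ∂μ ≤
      (∫ x, dualWeight ω₁ p x ∂μ) ^ (1 - t) * (∫ x, dualWeight ω₂ p x ∂μ) ^ t := by
    rw [dualWeight_rpow_mul_rpow hω₁0 hω₂0]
    exact integral_rpow_mul_rpow_le hσ₁ hσ₂ (dualWeight_nonneg hω₁0 p) (dualWeight_nonneg hω₂0 p)
      ht0 ht1
  set A₁ := ∫ x, ω₁ x ∂μ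
  set A₂ := ∫ x, ω₂ x ∂μ
  set B₁ := ∫ x, dualWeight ω₁ p x ∂μ
  set B₂ := ∫ x, dualWeight ω₂ p x ∂μ
  have hA₁ : 0 ≤ A₁ := integral_nonneg hω₁0
  have hA₂ : 0 ≤ A₂ := integral_nonneg hω₂0
  have hB₁ : 0 ≤ B₁ := integral_nonneg (dualWeight_nonneg hω₁0 p)
  have hB₂ : 0 ≤ B₂ := integral_nonneg (dualWeight_nonneg hω₂0 p)
  unfold apCharacteristic
  have hB₀ : 0 ≤ ∫ x, dualWeight (fun x => ω₁ x ^ (1 - t) * ω₂ x ^ t) p x ∂μ :=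
    integral_nonneg (dualWeight_nonneg (fun x => by have := hω₁0 x; have := hω₂0 x; positivity) p)
  calc _ ≤ (A₁ ^ (1 - t) * A₂ ^ t) * (B₁ ^ (1 - t) * B₂ ^ t) ^ (p - 1) :=
        mul_le_mul hA (Real.rpow_le_rpow hB₀ hB (by linarith)) (by positivity) (by positivity)
    _ = (A₁ * B₁ ^ (p - 1)) ^ (1 - t) * (A₂ * B₂ ^ (p - 1)) ^ t := by
        rw [Real.mul_rpow (by positivity) (by positivity), Real.mul_rpow hA₁ (by positivity),
          Real.mul_rpow hA₂ (by positivity), ← Real.rpow_mul hB₁, ← Real.rpow_mul hB₁,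
          ← Real.rpow_mul hB₂, ← Real.rpow_mul hB₂, mul_comm (1 - t), mul_comm t]
        ring

end Muckenhoupt

section Interval

variable {a b : ℝ}

theorem isProbabilityMeasure_cond_Ioc (hab : a < b) : IsProbabilityMeasure volume[|Ioc a b] :=
  cond_isProbabilityMeasure_of_finite (by simp [hab]) (by simp)

theorem inv_sub_mul_intervalIntegral_eq_integral_cond (f : ℝ → ℝ) (hab : a < b) :
    (b - a)⁻¹ * ∫ x in a..b, f x = ∫ x, f x ∂volume[|Ioc a b] := by
  rw [ProbabilityTheory.cond, integral_smul_measure, Real.volume_Ioc, ENNReal.toReal_inv,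
    ENNReal.toReal_ofReal (sub_nonneg.2 hab.le), intervalIntegral.integral_of_le hab.le,
    smul_eq_mul]

theorem MeasureTheory.LocallyIntegrable.integrable_cond_Ioc {E : Type*} [NormedAddCommGroup E]
    {f : ℝ → E} (hf : LocallyIntegrable f volume) (hab : a < b) :
    Integrable f volume[|Ioc a b] :=
  ((hf.integrableOn_isCompact isCompact_Icc).mono_set Ioc_subset_Icc_self).smul_measure
    (by simp [hab])

end Interval

section Weights

variable {ω ω₁ ω₂ : ℝ → ℝ} {p q t : ℝ}

theorem isApWeight_iff : IsApWeight ω p ↔ (∀ x, 0 ≤ ω x) ∧ LocallyIntegrable ω volume ∧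
    LocallyIntegrable (dualWeight ω p) volume ∧
    ∃ C : ℝ, 1 ≤ C ∧ ∀ a b : ℝ, a < b → apCharacteristic volume[|Ioc a b] ω p ≤ C := by
  unfold IsApWeight apCharacteristic
  refine and_congr_right' <| and_congr_right' <| and_congr_right' <| exists_congr fun C =>
    and_congr_right' <| forall₂_congr fun a b => forall_congr' fun hab => ?_
  simp only [dualWeight, inv_sub_mul_intervalIntegral_eq_integral_cond _ hab]

theorem IsApWeight.mono (h : IsApWeight ω p) (hp : 1 < p) (hpq : p ≤ q) : IsApWeight ω q := by
  rw [isApWeight_iff] at h ⊢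
  obtain ⟨hω0, hω, hσ, C, hC, hchar⟩ := h
  have hr0 : 0 ≤ (p - 1) / (q - 1) := div_nonneg (by linarith) (by linarith)
  have hr1 : (p - 1) / (q - 1) ≤ 1 := (div_le_one (by linarith)).2 (by linarith)
  refine ⟨hω0, hω, ?_, C, hC, fun a b hab => ?_⟩
  · rw [dualWeight_eq_rpow hω0 hp.ne' q]
    simpa using (locallyIntegrable_const 1).rpow_mul_rpow hσ (fun _ => zero_le_one)
      (dualWeight_nonneg hω0 p) hr0 hr1
  · have := isProbabilityMeasure_cond_Ioc hab
    exact (apCharacteristic_le_of_le hω0 (hσ.integrable_cond_Ioc hab) hp hpq).trans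
      (hchar a b hab)

theorem IsApWeight.rpow_mul_rpow (h₁ : IsApWeight ω₁ p) (h₂ : IsApWeight ω₂ p) (hp : 1 ≤ p)
    (ht0 : 0 ≤ t) (ht1 : t ≤ 1) : IsApWeight (fun x => ω₁ x ^ (1 - t) * ω₂ x ^ t) p := by
  rw [isApWeight_iff] at h₁ h₂ ⊢
  obtain ⟨hω₁0, hω₁, hσ₁, C₁, hC₁, hchar₁⟩ := h₁
  obtain ⟨hω₂0, hω₂, hσ₂, C₂, hC₂, hchar₂⟩ := h₂
  refine ⟨fun x => by have := hω₁0 x; have := hω₂0 x; positivity,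
    hω₁.rpow_mul_rpow hω₂ hω₁0 hω₂0 ht0 ht1, ?_, C₁ ^ (1 - t) * C₂ ^ t,
    one_le_mul_of_one_le_of_one_le (Real.one_le_rpow hC₁ (by linarith)) (Real.one_le_rpow hC₂ ht0),
    fun a b hab => ?_⟩
  · rw [dualWeight_rpow_mul_rpow hω₁0 hω₂0]
    exact hσ₁.rpow_mul_rpow hσ₂ (dualWeight_nonneg hω₁0 p) (dualWeight_nonneg hω₂0 p) ht0 ht1
  · refine (apCharacteristic_rpow_mul_rpow_le hω₁0 hω₂0 (hω₁.integrable_cond_Ioc hab)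
      (hω₂.integrable_cond_Ioc hab) (hσ₁.integrable_cond_Ioc hab) (hσ₂.integrable_cond_Ioc hab)
      hp ht0 ht1).trans ?_
    exact mul_le_mul
      (Real.rpow_le_rpow (apCharacteristic_nonneg hω₁0 _ p) (hchar₁ a b hab) (by linarith))
      (Real.rpow_le_rpow (apCharacteristic_nonneg hω₂0 _ p) (hchar₂ a b hab) ht0)
      (Real.rpow_nonneg (apCharacteristic_nonneg hω₂0 _ p) _) (Real.rpow_nonneg (by linarith) _)

theorem IsAInftyWeight.rpow_mul_rpow (h₁ : IsAInftyWeight ω₁) (h₂ : IsAInftyWeight ω₂)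
    (ht0 : 0 ≤ t) (ht1 : t ≤ 1) : IsAInftyWeight fun x => ω₁ x ^ (1 - t) * ω₂ x ^ t := by
  obtain ⟨p₁, hp₁, h₁⟩ := h₁
  obtain ⟨p₂, hp₂, h₂⟩ := h₂
  have hp : 1 < max p₁ p₂ := hp₁.trans_le (le_max_left _ _)
  exact ⟨max p₁ p₂, hp, (h₁.mono hp₁ (le_max_left _ _)).rpow_mul_rpow
    (h₂.mono hp₂ (le_max_right _ _)) hp.le ht0 ht1⟩

end Weights

theorem statement2_general (u₁ u₂ : ℝ → ℝ)
    (hA₁ : IsAInftyWeight fun x => Real.exp (u₁ x))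
    (hA₂ : IsAInftyWeight fun x => Real.exp (u₂ x))
    (t : ℝ) (ht0 : 0 ≤ t) (ht1 : t ≤ 1) :
    IsAInftyWeight (fun x => Real.exp ((1 - t) * u₁ x + t * u₂ x)) := by
  have hexp : (fun x => Real.exp ((1 - t) * u₁ x + t * u₂ x)) =
      fun x => Real.exp (u₁ x) ^ (1 - t) * Real.exp (u₂ x) ^ t := by
    ext x
    rw [← Real.exp_mul, ← Real.exp_mul, ← Real.exp_add, mul_comm (u₁ x), mul_comm (u₂ x)]
  rw [hexp]
  exact hA₁.rpow_mul_rpow hA₂ ht0 ht1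

/-- `BMO_ℝ^*(ℝ)` is convex: if `u₁, u₂` are real-valued BMO functions with
`e^{u₁}`, `e^{u₂}` `A_∞`-weights and `t ∈ [0,1]`, then `e^{(1-t)u₁ + t u₂}` is an `A_∞`-weight. -/
theorem statement2 (u₁ u₂ : ℝ → ℝ) (h₁ : IsBMO u₁) (h₂ : IsBMO u₂)
    (hA₁ : IsAInftyWeight fun x => Real.exp (u₁ x))
    (hA₂ : IsAInftyWeight fun x => Real.exp (u₂ x))
    (t : ℝ) (ht0 : 0 ≤ t) (ht1 : t ≤ 1) :
    IsAInftyWeight (fun x => Real.exp ((1 - t) * u₁ x + t * u₂ x)) :=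
  statement2_general u₁ u₂ hA₁ hA₂ t ht0 ht1
end

section
/- If f and g are strongly quasisymmetric homeomorphisms of ℝ onto itself, then the composition g∘f is also strongly quasisymmetric: g∘f is an increasing homeomorphism of ℝ, it is locally absolutely continuous with (g∘f)′ = (g′∘f)·f′ almost everywhere, and (g′∘f)·f′ is an A_∞-weight. -/
open MeasureTheory Set Filter Topology
open scoped ENNReal NNReal

/-!
An increasing, locally absolutely continuous homeomorphism `f` of `ℝ` pushes the measure
`f' dx` forward to Lebesgue measure. This gives the change of variables
`∫_a^b h (f x) f' x dx = ∫_{f a}^{f b} h` for every nonnegative locally integrable `h`; with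
`h = g'` it is the chain rule for `g ∘ f`.

If `f' ∈ A_p` and `g' ∈ A_q`, then `ω = (g' ∘ f) f' ∈ A_{pq}`. Writing `θ = (q-1)/(pq-1)`, the
dual weight factors pointwise as
`ω^(-1/(pq-1)) = ((g' ∘ f)^(-1/(q-1)) f')^θ · (f'^(-1/(p-1)))^(1-θ)`, so by Hölder's inequality
and the change of variables its integral over `[a, b]` is controlled by the dual integrals of
`g'` over `[f a, f b]` and of `f'` over `[a, b]`. This yields the constant `C_g C_f^q`.
-/

section Intervals

variable {E : Type*} [NormedAddCommGroup E] {μ : Measure ℝ} {h : ℝ → E}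

theorem MeasureTheory.LocallyIntegrable.integrableOn_Ioc (hh : LocallyIntegrable h μ) (a b : ℝ) :
    IntegrableOn h (Ioc a b) μ :=
  (hh.integrableOn_isCompact isCompact_Icc).mono_set Ioc_subset_Icc_self

theorem locallyIntegrable_of_forall_integrableOn_Ioc (hh : ∀ a b, IntegrableOn h (Ioc a b) μ) :
    LocallyIntegrable h μ := fun x =>
  ⟨Ioc (x - 1) (x + 1), Ioc_mem_nhds (by linarith) (by linarith), hh _ _⟩

end Intervals

section ChangeOfVariables

variable {f f' : ℝ → ℝ}

theorem StrictMono.preimage_Ioc (hmono : StrictMono f) (a b : ℝ) :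
    f ⁻¹' Ioc (f a) (f b) = Ioc a b :=
  (OrderEmbedding.ofStrictMono f hmono).preimage_Ioc a b

theorem StrictMono.measurableEmbedding_of_surjective (hmono : StrictMono f)
    (hsurj : Function.Surjective f) : MeasurableEmbedding f :=
  (hmono.orderIsoOfSurjective f hsurj).toHomeomorph.measurableEmbedding

theorem IsLocAC.setLIntegral_Ioc (hac : IsLocAC f f') (hf' : ∀ x, 0 ≤ f' x) {a b : ℝ}
    (hab : a < b) : ∫⁻ x in Ioc a b, ENNReal.ofReal (f' x) = ENNReal.ofReal (f b - f a) := by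
  rw [hac.2 a b hab, intervalIntegral.integral_of_le hab.le,
    ofReal_integral_eq_lintegral_ofReal (hac.1.integrableOn_Ioc a b) (ae_of_all _ hf')]

theorem IsLocAC.measurePreserving (hmono : StrictMono f) (hsurj : Function.Surjective f)
    (hac : IsLocAC f f') (hf' : ∀ x, 0 ≤ f' x) :
    MeasurePreserving f (volume.withDensity fun x => ENNReal.ofReal (f' x)) volume := by
  have hmeas := (hmono.measurableEmbedding_of_surjective hsurj).measurable
  refine ⟨hmeas, (Measure.ext_of_Ioc' volume _ (fun _ _ _ => by simp) fun c d hcd => ?_).symm⟩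
  obtain ⟨a, rfl⟩ := hsurj c
  obtain ⟨b, rfl⟩ := hsurj d
  rw [Measure.map_apply hmeas measurableSet_Ioc, hmono.preimage_Ioc,
    withDensity_apply _ measurableSet_Ioc, hac.setLIntegral_Ioc hf' (hmono.lt_iff_lt.1 hcd),
    Real.volume_Ioc]

theorem IsLocAC.comp_mul_ae_eq (hmono : StrictMono f) (hsurj : Function.Surjective f)
    (hac : IsLocAC f f') (hf' : ∀ x, 0 ≤ f' x) {h₁ h₂ : ℝ → ℝ} (hh : h₁ =ᵐ[volume] h₂) :
    (fun x => h₁ (f x) * f' x) =ᵐ[volume] fun x => h₂ (f x) * f' x := by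
  have hcomp := (hac.measurePreserving hmono hsurj hf').quasiMeasurePreserving.ae_eq_comp hh
  rw [EventuallyEq, ae_withDensity_iff' hac.1.aestronglyMeasurable.aemeasurable.ennreal_ofReal]
    at hcomp
  filter_upwards [hcomp] with x hx
  by_cases h0 : ENNReal.ofReal (f' x) = 0
  · simp [le_antisymm (ENNReal.ofReal_eq_zero.1 h0) (hf' x)]
  · rw [show h₁ (f x) = h₂ (f x) from hx h0]

theorem IsLocAC.aestronglyMeasurable_comp_mul (hmono : StrictMono f)
    (hsurj : Function.Surjective f) (hac : IsLocAC f f') (hf' : ∀ x, 0 ≤ f' x) {h : ℝ → ℝ}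
    (hh : AEStronglyMeasurable h volume) :
    AEStronglyMeasurable (fun x => h (f x) * f' x) volume :=
  ((hh.stronglyMeasurable_mk.measurable.comp
    (hmono.measurableEmbedding_of_surjective hsurj).measurable).aestronglyMeasurable.mul
      hac.1.aestronglyMeasurable).congr
    (hac.comp_mul_ae_eq hmono hsurj hf' hh.ae_eq_mk).symm

theorem IsLocAC.setLIntegral_Ioc_comp_mul (hmono : StrictMono f)
    (hsurj : Function.Surjective f) (hac : IsLocAC f f') (hf' : ∀ x, 0 ≤ f' x) {h : ℝ → ℝ}
    (hh : AEMeasurable h volume) (a b : ℝ) :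
    ∫⁻ x in Ioc a b, ENNReal.ofReal (h (f x) * f' x) =
      ∫⁻ y in Ioc (f a) (f b), ENNReal.ofReal (h y) := by
  have hmp := hac.measurePreserving hmono hsurj hf'
  have hk : AEMeasurable (fun x => ENNReal.ofReal (h (f x)))
      ((volume.restrict (Ioc a b)).withDensity fun x => ENNReal.ofReal (f' x)) := by
    rw [← restrict_withDensity measurableSet_Ioc]
    exact (hh.ennreal_ofReal.comp_quasiMeasurePreserving hmp.quasiMeasurePreserving).restrict
  rw [← hmp.setLIntegral_comp_preimage_emb (hmono.measurableEmbedding_of_surjective hsurj)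
      (fun y => ENNReal.ofReal (h y)),
    hmono.preimage_Ioc, restrict_withDensity measurableSet_Ioc,
    lintegral_withDensity_eq_lintegral_mul₀'
      hac.1.aestronglyMeasurable.aemeasurable.ennreal_ofReal.restrict hk]
  simp only [Pi.mul_apply, ← ENNReal.ofReal_mul (hf' _), mul_comm]

theorem IsLocAC.integrableOn_comp_mul (hmono : StrictMono f)
    (hsurj : Function.Surjective f) (hac : IsLocAC f f') (hf' : ∀ x, 0 ≤ f' x) {h : ℝ → ℝ}
    (hh : LocallyIntegrable h volume) (hh0 : ∀ y, 0 ≤ h y) (a b : ℝ) :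
    IntegrableOn (fun x => h (f x) * f' x) (Ioc a b) := by
  refine ⟨(hac.aestronglyMeasurable_comp_mul hmono hsurj hf' hh.aestronglyMeasurable).restrict,
    (hasFiniteIntegral_iff_ofReal (ae_of_all _ fun x => mul_nonneg (hh0 _) (hf' x))).2 ?_⟩
  rw [hac.setLIntegral_Ioc_comp_mul hmono hsurj hf' hh.aestronglyMeasurable.aemeasurable]
  exact (hasFiniteIntegral_iff_ofReal (ae_of_all _ hh0)).1 (hh.integrableOn_Ioc _ _).2

theorem IsLocAC.integral_comp_mul (hmono : StrictMono f)
    (hsurj : Function.Surjective f) (hac : IsLocAC f f') (hf' : ∀ x, 0 ≤ f' x) {h : ℝ → ℝ}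
    (hh : AEStronglyMeasurable h volume) (hh0 : ∀ y, 0 ≤ h y) {a b : ℝ} (hab : a ≤ b) :
    ∫ x in a..b, h (f x) * f' x = ∫ y in f a..f b, h y := by
  rw [intervalIntegral.integral_of_le hab, intervalIntegral.integral_of_le (hmono.monotone hab),
    integral_eq_lintegral_of_nonneg_ae (ae_of_all _ fun x => mul_nonneg (hh0 _) (hf' x))
      (hac.aestronglyMeasurable_comp_mul hmono hsurj hf' hh).restrict,
    integral_eq_lintegral_of_nonneg_ae (ae_of_all _ hh0) hh.restrict,
    hac.setLIntegral_Ioc_comp_mul hmono hsurj hf' hh.aemeasurable]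

theorem IsLocAC.comp {g g' : ℝ → ℝ} (hg : IsLocAC g g') (hg' : ∀ y, 0 ≤ g' y)
    (hmono : StrictMono f) (hsurj : Function.Surjective f) (hf : IsLocAC f f')
    (hf' : ∀ x, 0 ≤ f' x) : IsLocAC (fun x => g (f x)) (fun x => g' (f x) * f' x) :=
  ⟨locallyIntegrable_of_forall_integrableOn_Ioc (hf.integrableOn_comp_mul hmono hsurj hf' hg.1 hg'),
    fun a b hab => by
      rw [hf.integral_comp_mul hmono hsurj hf' hg.1.aestronglyMeasurable hg' hab.le,
        hg.2 _ _ (hmono hab)]⟩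

end ChangeOfVariables

section Holder

variable {α : Type*} [MeasurableSpace α] {μ : Measure α} {F G : α → ℝ} {θ θ' : ℝ}

theorem lintegral_ofReal_rpow_mul_rpow_le (hF : AEMeasurable F μ) (hG : AEMeasurable G μ)
    (hF0 : ∀ x, 0 ≤ F x) (hG0 : ∀ x, 0 ≤ G x) (hθ : 0 ≤ θ) (hθ' : 0 ≤ θ') (hsum : θ + θ' = 1) :
    ∫⁻ x, ENNReal.ofReal (F x ^ θ * G x ^ θ') ∂μ ≤
      (∫⁻ x, ENNReal.ofReal (F x) ∂μ) ^ θ * (∫⁻ x, ENNReal.ofReal (G x) ∂μ) ^ θ' := by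
  simp only [ENNReal.ofReal_mul (Real.rpow_nonneg (hF0 _) _),
    ← ENNReal.ofReal_rpow_of_nonneg (hF0 _) hθ, ← ENNReal.ofReal_rpow_of_nonneg (hG0 _) hθ']
  exact ENNReal.lintegral_mul_norm_pow_le hF.ennreal_ofReal hG.ennreal_ofReal hθ hθ' hsum

theorem MeasureTheory.Integrable.rpow_mul_rpow_s4 (hF : Integrable F μ) (hG : Integrable G μ)
    (hF0 : ∀ x, 0 ≤ F x) (hG0 : ∀ x, 0 ≤ G x) (hθ : 0 ≤ θ) (hθ' : 0 ≤ θ') (hsum : θ + θ' = 1) :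
    Integrable (fun x => F x ^ θ * G x ^ θ') μ := by
  refine ⟨((hF.aemeasurable.pow_const θ).mul (hG.aemeasurable.pow_const θ')).aestronglyMeasurable,
    (hasFiniteIntegral_iff_ofReal (ae_of_all _ fun x =>
      mul_nonneg (Real.rpow_nonneg (hF0 x) θ) (Real.rpow_nonneg (hG0 x) θ'))).2 ?_⟩
  refine (lintegral_ofReal_rpow_mul_rpow_le hF.aemeasurable hG.aemeasurable hF0 hG0 hθ hθ'
    hsum).trans_lt (ENNReal.mul_lt_top ?_ ?_)
  · exact ENNReal.rpow_lt_top_of_nonneg hθ hF.lintegral_lt_top.ne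
  · exact ENNReal.rpow_lt_top_of_nonneg hθ' hG.lintegral_lt_top.ne

theorem integral_rpow_mul_rpow_le_s4 (hF : Integrable F μ) (hG : Integrable G μ)
    (hF0 : ∀ x, 0 ≤ F x) (hG0 : ∀ x, 0 ≤ G x) (hθ : 0 ≤ θ) (hθ' : 0 ≤ θ') (hsum : θ + θ' = 1) :
    ∫ x, F x ^ θ * G x ^ θ' ∂μ ≤ (∫ x, F x ∂μ) ^ θ * (∫ x, G x ∂μ) ^ θ' := by
  rw [integral_eq_lintegral_of_nonneg_ae
      (ae_of_all _ fun x => mul_nonneg (Real.rpow_nonneg (hF0 x) θ) (Real.rpow_nonneg (hG0 x) θ'))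
      (hF.rpow_mul_rpow_s4 hG hF0 hG0 hθ hθ' hsum).1,
    integral_eq_lintegral_of_nonneg_ae (ae_of_all _ hF0) hF.1,
    integral_eq_lintegral_of_nonneg_ae (ae_of_all _ hG0) hG.1,
    ENNReal.toReal_rpow, ENNReal.toReal_rpow, ← ENNReal.toReal_mul]
  refine ENNReal.toReal_mono (ENNReal.mul_ne_top ?_ ?_)
    (lintegral_ofReal_rpow_mul_rpow_le hF.aemeasurable hG.aemeasurable hF0 hG0 hθ hθ' hsum)
  · exact (ENNReal.rpow_lt_top_of_nonneg hθ hF.lintegral_lt_top.ne).ne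
  · exact (ENNReal.rpow_lt_top_of_nonneg hθ' hG.lintegral_lt_top.ne).ne

end Holder

theorem holder_exponents_of_one_lt {p q : ℝ} (hp : 1 < p) (hq : 1 < q) :
    0 ≤ (q - 1) / (p * q - 1) ∧ 0 ≤ (p - 1) * q / (p * q - 1) ∧
      (q - 1) / (p * q - 1) + (p - 1) * q / (p * q - 1) = 1 := by
  have hpq : 0 < p * q - 1 := by nlinarith
  refine ⟨div_nonneg (by linarith) hpq.le, div_nonneg (by nlinarith) hpq.le, ?_⟩
  rw [← add_div, div_eq_one_iff_eq hpq.ne']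
  ring

-- With Lean's convention `1 / 0 = 0`, this also holds when `u` or `v` vanishes.
theorem one_div_mul_rpow_eq {u v p q : ℝ} (hu : 0 ≤ u) (hv : 0 ≤ v) (hp : 1 < p) (hq : 1 < q) :
    (1 / (u * v)) ^ (1 / (p * q - 1)) =
      ((1 / u) ^ (1 / (q - 1)) * v) ^ ((q - 1) / (p * q - 1)) *
        ((1 / v) ^ (1 / (p - 1))) ^ ((p - 1) * q / (p * q - 1)) := by
  have hpq : 0 < p * q - 1 := by nlinarith
  have hθ : 0 < (q - 1) / (p * q - 1) := div_pos (by linarith) hpq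
  have hθ' : 0 < (p - 1) * q / (p * q - 1) := div_pos (by nlinarith) hpq
  rcases hu.eq_or_lt with rfl | hu
  · simp [Real.zero_rpow (inv_pos.2 hpq).ne', Real.zero_rpow (inv_pos.2 (sub_pos.2 hq)).ne',
      Real.zero_rpow hθ.ne']
  rcases hv.eq_or_lt with rfl | hv
  · simp [Real.zero_rpow (inv_pos.2 hpq).ne', Real.zero_rpow (inv_pos.2 (sub_pos.2 hp)).ne',
      Real.zero_rpow hθ'.ne']
  refine Real.log_injOn_pos (mem_Ioi.2 (by positivity)) (mem_Ioi.2 (by positivity)) ?_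
  rw [Real.log_rpow (by positivity), Real.log_mul (by positivity) (by positivity),
    Real.log_rpow (by positivity), Real.log_rpow (by positivity),
    Real.log_mul (by positivity) hv.ne', Real.log_rpow (by positivity),
    Real.log_rpow (by positivity)]
  simp only [one_div, Real.log_inv, Real.log_mul hu.ne' hv.ne']
  have hp1 : p - 1 ≠ 0 := by linarith
  have hq1 : q - 1 ≠ 0 := by linarith
  field_simp
  ring

-- The numbers stand for `L = b - a`, `M = f b - f a`, `X = ∫_a^b ω`, `S = ∫_a^b ω^(-1/(pq-1))`
-- and the dual integrals `Yf` of `f'` over `[a, b]` and `Yg` of `g'` over `[f a, f b]`.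
theorem mul_rpow_le_of_ap_bounds {L M X Yf Yg S p q Cf Cg : ℝ} (hL : 0 < L) (hM : 0 < M)
    (hX : 0 ≤ X) (hYf : 0 ≤ Yf) (hYg : 0 ≤ Yg) (hS0 : 0 ≤ S) (hp : 1 < p) (hq : 1 < q)
    (hS : S ≤ Yg ^ ((q - 1) / (p * q - 1)) * Yf ^ ((p - 1) * q / (p * q - 1)))
    (hf : L⁻¹ * M * (L⁻¹ * Yf) ^ (p - 1) ≤ Cf) (hg : M⁻¹ * X * (M⁻¹ * Yg) ^ (q - 1) ≤ Cg) :
    L⁻¹ * X * (L⁻¹ * S) ^ (p * q - 1) ≤ Cg * Cf ^ q := by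
  have hpq : 0 < p * q - 1 := by nlinarith
  set θ := (q - 1) / (p * q - 1) with hθ
  set θ' := (p - 1) * q / (p * q - 1) with hθ'
  set A := L⁻¹ * M
  set Bf := L⁻¹ * Yf
  set Bg := M⁻¹ * Yg
  have hA : 0 < A := by positivity
  have hLS : L⁻¹ * S ≤ (A * Bg) ^ θ * Bf ^ θ' := by
    have hsum : θ + θ' = 1 := (holder_exponents_of_one_lt hp hq).2.2
    calc L⁻¹ * S ≤ (L⁻¹ ^ θ * L⁻¹ ^ θ') * (Yg ^ θ * Yf ^ θ') := by
          rw [← Real.rpow_add (by positivity), hsum, Real.rpow_one]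
          exact mul_le_mul_of_nonneg_left hS (by positivity)
      _ = (A * Bg) ^ θ * Bf ^ θ' := by
          rw [show A * Bg = L⁻¹ * Yg by simp only [A, Bg]; field_simp,
            Real.mul_rpow (by positivity) hYg, Real.mul_rpow (by positivity) hYf]
          ring
  have hexp : ((A * Bg) ^ θ * Bf ^ θ') ^ (p * q - 1) = (A * Bg) ^ (q - 1) * Bf ^ ((p - 1) * q) := by
    rw [Real.mul_rpow (by positivity) (by positivity), ← Real.rpow_mul (by positivity),
      ← Real.rpow_mul (by positivity), hθ, hθ', div_mul_cancel₀ _ hpq.ne',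
      div_mul_cancel₀ _ hpq.ne']
  calc L⁻¹ * X * (L⁻¹ * S) ^ (p * q - 1)
      ≤ L⁻¹ * X * ((A * Bg) ^ θ * Bf ^ θ') ^ (p * q - 1) := by gcongr
    _ = M⁻¹ * X * Bg ^ (q - 1) * (A * Bf ^ (p - 1)) ^ q := by
      have hAq : A ^ q = A * A ^ (q - 1) := by
        rw [← Real.rpow_one_add' hA.le (by linarith), add_sub_cancel]
      have hLX : L⁻¹ * X = A * (M⁻¹ * X) := by
        simp only [A]
        field_simp
      rw [hexp, Real.mul_rpow hA.le (by positivity), Real.mul_rpow hA.le (by positivity),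
        ← Real.rpow_mul (by positivity), hAq, hLX]
      ring
    _ ≤ Cg * Cf ^ q := by
      have hCg : 0 ≤ Cg := le_trans (by positivity) hg
      exact mul_le_mul hg (Real.rpow_le_rpow (by positivity) hf (by linarith)) (by positivity) hCg

section DualWeight

variable {f f' g' : ℝ → ℝ} {p q : ℝ}

theorem IsLocAC.integrableOn_dual_comp_mul (hmono : StrictMono f)
    (hsurj : Function.Surjective f) (hac : IsLocAC f f') (hf' : ∀ x, 0 ≤ f' x)
    (hg' : ∀ y, 0 ≤ g' y) (hp : 1 < p) (hq : 1 < q)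
    (hfσ : LocallyIntegrable (fun x => (1 / f' x) ^ (1 / (p - 1))) volume)
    (hgσ : LocallyIntegrable (fun y => (1 / g' y) ^ (1 / (q - 1))) volume) (a b : ℝ) :
    IntegrableOn (fun x => (1 / (g' (f x) * f' x)) ^ (1 / (p * q - 1))) (Ioc a b) := by
  obtain ⟨hθ, hθ', hsum⟩ := holder_exponents_of_one_lt hp hq
  simp only [one_div_mul_rpow_eq (hg' _) (hf' _) hp hq]
  exact (hac.integrableOn_comp_mul hmono hsurj hf' hgσ
    (fun y => Real.rpow_nonneg (one_div_nonneg.2 (hg' y)) _) a b).rpow_mul_rpow_s4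
    (hfσ.integrableOn_Ioc a b) (fun x => mul_nonneg (Real.rpow_nonneg (one_div_nonneg.2 (hg' _)) _)
      (hf' x)) (fun x => Real.rpow_nonneg (one_div_nonneg.2 (hf' x)) _) hθ hθ' hsum

theorem IsLocAC.integral_dual_comp_mul_le (hmono : StrictMono f)
    (hsurj : Function.Surjective f) (hac : IsLocAC f f') (hf' : ∀ x, 0 ≤ f' x)
    (hg' : ∀ y, 0 ≤ g' y) (hp : 1 < p) (hq : 1 < q)
    (hfσ : LocallyIntegrable (fun x => (1 / f' x) ^ (1 / (p - 1))) volume)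
    (hgσ : LocallyIntegrable (fun y => (1 / g' y) ^ (1 / (q - 1))) volume) {a b : ℝ}
    (hab : a ≤ b) :
    ∫ x in a..b, (1 / (g' (f x) * f' x)) ^ (1 / (p * q - 1)) ≤
      (∫ y in f a..f b, (1 / g' y) ^ (1 / (q - 1))) ^ ((q - 1) / (p * q - 1)) *
        (∫ x in a..b, (1 / f' x) ^ (1 / (p - 1))) ^ ((p - 1) * q / (p * q - 1)) := by
  obtain ⟨hθ, hθ', hsum⟩ := holder_exponents_of_one_lt hp hq
  have hgσ0 : ∀ y, 0 ≤ (1 / g' y) ^ (1 / (q - 1)) :=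
    fun y => Real.rpow_nonneg (one_div_nonneg.2 (hg' y)) _
  rw [← hac.integral_comp_mul hmono hsurj hf' hgσ.aestronglyMeasurable hgσ0 hab]
  simp only [one_div_mul_rpow_eq (hg' _) (hf' _) hp hq, intervalIntegral.integral_of_le hab]
  exact integral_rpow_mul_rpow_le_s4 (hac.integrableOn_comp_mul hmono hsurj hf' hgσ hgσ0 a b)
    (hfσ.integrableOn_Ioc a b) (fun x => mul_nonneg (hgσ0 _) (hf' x))
    (fun x => Real.rpow_nonneg (one_div_nonneg.2 (hf' x)) _) hθ hθ' hsum

end DualWeight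

theorem IsApWeight.comp_mul_deriv {f f' g' : ℝ → ℝ} {p q : ℝ} (hg : IsApWeight g' q) (hq : 1 < q)
    (hmono : StrictMono f) (hsurj : Function.Surjective f) (hac : IsLocAC f f')
    (hf : IsApWeight f' p) (hp : 1 < p) :
    IsApWeight (fun x => g' (f x) * f' x) (p * q) := by
  obtain ⟨hf0, -, hfσ, Cf, hCf, hAf⟩ := hf
  obtain ⟨hg0, hgli, hgσ, Cg, hCg, hAg⟩ := hg
  refine ⟨fun x => mul_nonneg (hg0 _) (hf0 x),
    locallyIntegrable_of_forall_integrableOn_Ioc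
      (hac.integrableOn_comp_mul hmono hsurj hf0 hgli hg0),
    locallyIntegrable_of_forall_integrableOn_Ioc
      (hac.integrableOn_dual_comp_mul hmono hsurj hf0 hg0 hp hq hfσ hgσ),
    Cg * Cf ^ q, one_le_mul_of_one_le_of_one_le hCg (Real.one_le_rpow hCf (by linarith)),
    fun a b hab => ?_⟩
  have hM : f a < f b := hmono hab
  have hAfab := hAf a b hab
  rw [← hac.2 a b hab] at hAfab
  have hAgab := hAg _ _ hM
  rw [← hac.integral_comp_mul hmono hsurj hf0 hgli.aestronglyMeasurable hg0 hab.le] at hAgab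
  exact mul_rpow_le_of_ap_bounds (sub_pos.2 hab) (sub_pos.2 hM)
    (intervalIntegral.integral_nonneg hab.le fun x _ => mul_nonneg (hg0 _) (hf0 x))
    (intervalIntegral.integral_nonneg hab.le fun x _ =>
      Real.rpow_nonneg (one_div_nonneg.2 (hf0 x)) _)
    (intervalIntegral.integral_nonneg hM.le fun y _ =>
      Real.rpow_nonneg (one_div_nonneg.2 (hg0 y)) _)
    (intervalIntegral.integral_nonneg hab.le fun x _ =>
      Real.rpow_nonneg (one_div_nonneg.2 (mul_nonneg (hg0 _) (hf0 x))) _)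
    hp hq (hac.integral_dual_comp_mul_le hmono hsurj hf0 hg0 hp hq hfσ hgσ hab.le) hAfab hAgab

/-- the composition of strongly quasisymmetric homeomorphisms of `ℝ`
is strongly quasisymmetric, with derivative `(g'∘f)·f'` (an `A_∞`-weight). -/
theorem statement4 (f f' g g' : ℝ → ℝ) (hf : IsSQSWith f f') (hg : IsSQSWith g g') :
    StrictMono (fun x => g (f x)) ∧ Function.Surjective (fun x => g (f x)) ∧
    IsLocAC (fun x => g (f x)) (fun x => g' (f x) * f' x) ∧
    IsAInftyWeight (fun x => g' (f x) * f' x) := by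
  obtain ⟨hfmono, hfsurj, hfac, p, hp, hfw⟩ := hf
  obtain ⟨hgmono, hgsurj, hgac, q, hq, hgw⟩ := hg
  exact ⟨hgmono.comp hfmono, hgsurj.comp hfsurj, hgac.comp hgw.1 hfmono hfsurj hfac hfw.1,
    p * q, one_lt_mul_of_lt_of_le hp hq.le, hgw.comp_mul_deriv hq hfmono hfsurj hfac hfw hp⟩
end

section
/- For k > 0 let f_k : ℝ → ℝ be the increasing piecewise-linear homeomorphism with f_k(x) = x for x ≥ 0, f_k(x) = (k/(k+1))x for −(k+1)/k < x < 0, and f_k(x) = x + 1/k for x ≤ −(k+1)/k; for a positive integer n let ℓ_n(x) = x for x ≥ 0 and ℓ_n(x) = (n/(n+1))x for x < 0. Then the increasing homeomorphism g = f_k∘ℓ_n^{-1}∘f_k^{-1} is locally absolutely continuous, its derivative satisfies log g′(x) = log(1 + 1/n) for −n/(n+1) < x < 0 and log g′(x) = log(1 + 1/n) + log(1 + 1/k) for −1 < x < −n/(n+1), and the BMO seminorm satisfies ‖log g′‖_* ≥ (1/2) log(1 + 1/k) for every n. -/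
open MeasureTheory Set Filter Topology
open scoped ENNReal NNReal

open MeasureTheory in
lemma auxIntervalIntegrable {f : ℝ → ℝ} (hf : Measurable f) {M : ℝ}
    (hM : ∀ x, ‖f x‖ ≤ M) (a b : ℝ) : IntervalIntegrable f volume a b := by
  constructor <;>
    exact Measure.integrableOn_of_bounded (measure_Ioc_lt_top).ne
      hf.aestronglyMeasurable (Filter.Eventually.of_forall hM)

open MeasureTheory in
lemma auxLocallyIntegrable {f : ℝ → ℝ} (hf : Measurable f) {M : ℝ}
    (hM : ∀ x, ‖f x‖ ≤ M) : LocallyIntegrable f volume := fun x =>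
  ⟨Set.Ioo (x - 1) (x + 1), Ioo_mem_nhds (by linarith) (by linarith),
    Measure.integrableOn_of_bounded (measure_Ioo_lt_top).ne
      hf.aestronglyMeasurable (Filter.Eventually.of_forall hM)⟩

lemma auxLinDeriv (s q x : ℝ) : HasDerivAt (fun y : ℝ => s * y + q) s x := by
  simpa using (HasDerivAt.const_mul s (hasDerivAt_id x)).add_const q

set_option maxHeartbeats 2000000 in
/-- the explicit example `g = f_k ∘ ℓ_n⁻¹ ∘ f_k⁻¹` with the stated values
of `log g'` and the lower bound `‖log g'‖_* ≥ (1/2) log(1 + 1/k)`. -/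
theorem statement11 (k : ℝ) (hk : 0 < k) (n : ℕ) (hn : 1 ≤ n) :
    let fk : ℝ → ℝ := fun x =>
      if 0 ≤ x then x else if -((k + 1) / k) < x then (k / (k + 1)) * x else x + 1 / k
    let ln : ℝ → ℝ := fun x => if 0 ≤ x then x else ((n : ℝ) / ((n : ℝ) + 1)) * x
    let g : ℝ → ℝ := fun x => fk (Function.invFun ln (Function.invFun fk x))
    StrictMono g ∧ Function.Surjective g ∧
    ∃ g' : ℝ → ℝ, IsLocAC g g' ∧
      (∀ x : ℝ, -((n : ℝ) / ((n : ℝ) + 1)) < x → x < 0 →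
        Real.log (g' x) = Real.log (1 + 1 / (n : ℝ))) ∧
      (∀ x : ℝ, -1 < x → x < -((n : ℝ) / ((n : ℝ) + 1)) →
        Real.log (g' x) = Real.log (1 + 1 / (n : ℝ)) + Real.log (1 + 1 / k)) ∧
      ENNReal.ofReal ((1 / 2) * Real.log (1 + 1 / k))
        ≤ bmoSeminorm (fun x => Real.log (g' x)) := by
  intro fk ln g
  have hN : (1 : ℝ) ≤ (n : ℝ) := by exact_mod_cast hn
  set N : ℝ := (n : ℝ) with hNdef
  have hN0 : (0 : ℝ) < N := lt_of_lt_of_le one_pos hN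
  have hN1 : (0 : ℝ) < N + 1 := by linarith
  have hk1 : (0 : ℝ) < k + 1 := by linarith
  have hik : (0 : ℝ) < 1 / k := by positivity
  have hikk : 1 / k * k = 1 := by field_simp
  have hiN : (0 : ℝ) < 1 / N := by positivity
  have hiNN : 1 / N * N = 1 := by field_simp
  have hdiv : (k + 1) / k = 1 + 1 / k := by field_simp
  set m : ℝ := N / (N + 1) with hm
  have hm0 : 0 < m := by rw [hm]; exact div_pos hN0 hN1
  have hm1 : m < 1 := by rw [hm, div_lt_one hN1]; linarith
  set c : ℝ := (1 + 1 / N) / k with hc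
  have hc0 : 0 < c := by rw [hc]; exact div_pos (by linarith) hk
  have hcm : c * m = 1 / k := by
    rw [hc, hm]; field_simp
  -- positivity facts
  have hpk1 : (0:ℝ) < (k+1)/k := by positivity
  have hpN1 : (0:ℝ) < (N+1)/N := div_pos hN1 hN0
  have hgeN1 : (1:ℝ) ≤ (N+1)/N := by rw [le_div_iff₀ hN0]; linarith
  -- max/min representations
  have hfk_eq : ∀ x, fk x = max x (min (k / (k + 1) * x) (x + 1 / k)) := by
    intro x
    simp only [fk]
    rcases le_or_gt 0 x with h0 | h0
    · have e1 : k / (k + 1) * x ≤ x + 1 / k := by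
        rw [div_mul_eq_mul_div, div_le_iff₀ hk1]; nlinarith
      have e2 : k / (k + 1) * x ≤ x := by
        rw [div_mul_eq_mul_div, div_le_iff₀ hk1]; nlinarith
      rw [if_pos h0, min_eq_left e1, max_eq_left e2]
    · rw [if_neg (not_le.mpr h0)]
      by_cases hb : -((k + 1) / k) < x
      · have hb' : -(1 + 1 / k) < x := by rwa [hdiv] at hb
        have e1 : k / (k + 1) * x ≤ x + 1 / k := by
          rw [div_mul_eq_mul_div, div_le_iff₀ hk1]; nlinarith
        have e2 : x ≤ k / (k + 1) * x := by
          rw [div_mul_eq_mul_div, le_div_iff₀ hk1]; nlinarith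
        rw [if_pos hb, min_eq_left e1, max_eq_right e2]
      · have hb' : x ≤ -(1 + 1 / k) := by
          have h := not_lt.mp hb; rwa [hdiv] at h
        have e1 : x + 1 / k ≤ k / (k + 1) * x := by
          rw [div_mul_eq_mul_div, le_div_iff₀ hk1]; nlinarith
        rw [if_neg hb, min_eq_right e1, max_eq_right (by linarith)]
  have hln_eq : ∀ x, ln x = max x (N / (N + 1) * x) := by
    intro x
    simp only [ln, ← hNdef]
    rcases le_or_gt 0 x with h0 | h0
    · have e1 : N / (N + 1) * x ≤ x := by
        rw [div_mul_eq_mul_div, div_le_iff₀ hN1]; nlinarith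
      rw [if_pos h0, max_eq_left e1]
    · have e1 : x ≤ N / (N + 1) * x := by
        rw [div_mul_eq_mul_div, le_div_iff₀ hN1]; nlinarith
      rw [if_neg (not_le.mpr h0), max_eq_right e1]
  -- inverse candidates
  set Fi : ℝ → ℝ := fun y => min y (max ((k + 1) / k * y) (y - 1 / k)) with hFi
  set Li : ℝ → ℝ := fun y => min y ((N + 1) / N * y) with hLi
  -- strict monotonicity
  have hfk_mono : StrictMono fk := by
    intro a b hab
    rw [hfk_eq a, hfk_eq b]
    have h1 : k / (k + 1) * a < k / (k + 1) * b :=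
      mul_lt_mul_of_pos_left hab (div_pos hk hk1)
    exact max_lt_max hab (min_lt_min h1 (by linarith))
  have hln_mono : StrictMono ln := by
    intro a b hab
    rw [hln_eq a, hln_eq b]
    exact max_lt_max hab (mul_lt_mul_of_pos_left hab (div_pos hN0 hN1))
  have hFi_mono : StrictMono Fi := by
    intro a b hab
    rw [hFi]
    exact min_lt_min hab (max_lt_max (mul_lt_mul_of_pos_left hab hpk1) (by linarith))
  have hLi_mono : StrictMono Li := by
    intro a b hab
    rw [hLi]
    exact min_lt_min hab (mul_lt_mul_of_pos_left hab hpN1)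
  -- fk ∘ Fi = id, ln ∘ Li = id
  have hfFi : ∀ y, fk (Fi y) = y := by
    intro y
    rw [hFi]
    simp only
    rcases le_or_gt 0 y with h0 | h0
    · have e1 : y - 1 / k ≤ (k + 1) / k * y := by
        rw [div_mul_eq_mul_div, le_div_iff₀ hk]; nlinarith
      have e2 : y ≤ (k + 1) / k * y := by
        rw [div_mul_eq_mul_div, le_div_iff₀ hk]; nlinarith
      rw [max_eq_left e1, min_eq_left e2]
      simp only [fk]
      rw [if_pos h0]
    · by_cases hb : -1 < y
      · have e1 : y - 1 / k ≤ (k + 1) / k * y := by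
          rw [div_mul_eq_mul_div, le_div_iff₀ hk]; nlinarith
        have e2 : (k + 1) / k * y ≤ y := by
          rw [div_mul_eq_mul_div, div_le_iff₀ hk]; nlinarith
        rw [max_eq_left e1, min_eq_right e2]
        have hz0 : (k + 1) / k * y < 0 := mul_neg_of_pos_of_neg hpk1 h0
        have hz1 : -((k + 1) / k) < (k + 1) / k * y := by
          have := mul_lt_mul_of_pos_left hb hpk1
          simpa using this
        simp only [fk]
        rw [if_neg (not_le.mpr hz0), if_pos hz1]
        field_simp
      · have hb' : y ≤ -1 := not_lt.mp hb
        have e1 : (k + 1) / k * y ≤ y - 1 / k := by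
          rw [div_mul_eq_mul_div, div_le_iff₀ hk]; nlinarith
        have e2 : y - 1 / k ≤ y := by linarith
        rw [max_eq_right e1, min_eq_right e2]
        have hz0 : y - 1 / k < 0 := by linarith
        have hz1 : ¬(-((k + 1) / k) < y - 1 / k) := by
          rw [hdiv]; push_neg; linarith
        simp only [fk]
        rw [if_neg (not_le.mpr hz0), if_neg hz1]
        ring
  have hlLi : ∀ y, ln (Li y) = y := by
    intro y
    rw [hLi]
    simp only
    rcases le_or_gt 0 y with h0 | h0
    · have e1 : y ≤ (N + 1) / N * y := by
        rw [div_mul_eq_mul_div, le_div_iff₀ hN0]; nlinarith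
      rw [min_eq_left e1]
      simp only [ln, ← hNdef]
      rw [if_pos h0]
    · have e1 : (N + 1) / N * y ≤ y := by
        rw [div_mul_eq_mul_div, div_le_iff₀ hN0]; nlinarith
      rw [min_eq_right e1]
      have hz0 : (N + 1) / N * y < 0 := mul_neg_of_pos_of_neg hpN1 h0
      simp only [ln, ← hNdef]
      rw [if_neg (not_le.mpr hz0)]
      field_simp
  -- invFun computations
  have hinvf : ∀ y, Function.invFun fk y = Fi y := fun y =>
    hfk_mono.injective (by rw [Function.invFun_eq ⟨Fi y, hfFi y⟩, hfFi y])
  have hinvl : ∀ y, Function.invFun ln y = Li y := fun y =>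
    hln_mono.injective (by rw [Function.invFun_eq ⟨Li y, hlLi y⟩, hlLi y])
  have hgeq : ∀ x, g x = fk (Li (Fi x)) := by
    intro x
    simp only [g, hinvf, hinvl]
  have hg_mono : StrictMono g := by
    intro a b hab
    rw [hgeq a, hgeq b]
    exact hfk_mono (hLi_mono (hFi_mono hab))
  have hFif : ∀ x, Fi (fk x) = x := fun x =>
    hfk_mono.injective (by rw [hfFi (fk x)])
  have hLil : ∀ x, Li (ln x) = x := fun x =>
    hln_mono.injective (by rw [hlLi (ln x)])
  have hg_surj : Function.Surjective g := fun y =>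
    ⟨fk (ln (Fi y)), by rw [hgeq, hFif, hLil, hfFi]⟩
  refine ⟨hg_mono, hg_surj, ?_⟩
  -- the explicit antiderivative G and derivative gd
  set G : ℝ → ℝ := fun x => x + min x 0 / N + c * max (-1) (min x (-m)) + 1 / k with hG
  set gd : ℝ → ℝ := fun x =>
    1 + (if x < 0 then 1 / N else 0) + (if -1 ≤ x ∧ x < -m then c else 0) with hgd
  -- evaluation lemmas for G
  have hGA : ∀ y, 0 ≤ y → G y = y := by
    intro y hy
    rw [hG]
    simp only
    rw [min_eq_right hy, min_eq_right (by linarith : -m ≤ y),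
      max_eq_right (by linarith : (-1 : ℝ) ≤ -m), mul_neg, hcm]
    ring
  have hGB : ∀ y, -m ≤ y → y ≤ 0 → G y = (1 + 1 / N) * y := by
    intro y hy1 hy2
    rw [hG]
    simp only
    rw [min_eq_left hy2, min_eq_right hy1,
      max_eq_right (by linarith : (-1 : ℝ) ≤ -m), mul_neg, hcm]
    ring
  have hGC : ∀ y, -1 ≤ y → y ≤ -m → G y = (1 + 1 / N + c) * y + 1 / k := by
    intro y hy1 hy2
    rw [hG]
    simp only
    rw [min_eq_left (by linarith : y ≤ 0), min_eq_left hy2, max_eq_right hy1]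
    ring
  have hGD : ∀ y, y ≤ -1 → G y = (1 + 1 / N) * y + (1 / k - c) := by
    intro y hy
    rw [hG]
    simp only
    rw [min_eq_left (by linarith : y ≤ 0), min_eq_left (by linarith : y ≤ -m),
      max_eq_left (by linarith : y ≤ (-1 : ℝ))]
    ring
  -- g = G
  have hgG : ∀ x, g x = G x := by
    intro x
    rw [hgeq, hFi, hLi]
    simp only
    rcases le_or_gt 0 x with h0 | h0
    · have e1 : x - 1 / k ≤ (k + 1) / k * x := by
        rw [div_mul_eq_mul_div, le_div_iff₀ hk]; nlinarith
      have e2 : x ≤ (k + 1) / k * x := by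
        rw [div_mul_eq_mul_div, le_div_iff₀ hk]; nlinarith
      have e3 : x ≤ (N + 1) / N * x := by
        rw [div_mul_eq_mul_div, le_div_iff₀ hN0]; nlinarith
      rw [max_eq_left e1, min_eq_left e2, min_eq_left e3, hGA x h0]
      simp only [fk]
      rw [if_pos h0]
    · by_cases hb : -1 < x
      · -- Fi x = (k+1)/k * x
        have e1 : x - 1 / k ≤ (k + 1) / k * x := by
          rw [div_mul_eq_mul_div, le_div_iff₀ hk]; nlinarith
        have e2 : (k + 1) / k * x ≤ x := by
          rw [div_mul_eq_mul_div, div_le_iff₀ hk]; nlinarith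
        rw [max_eq_left e1, min_eq_right e2]
        have hz0 : (k + 1) / k * x < 0 := mul_neg_of_pos_of_neg hpk1 h0
        have e3 : (N + 1) / N * ((k + 1) / k * x) ≤ (k + 1) / k * x := by
          nlinarith [hz0, hgeN1]
        rw [min_eq_right e3]
        have hz0' : (N + 1) / N * ((k + 1) / k * x) < 0 :=
          mul_neg_of_pos_of_neg hpN1 hz0
        by_cases hmx : -m < x
        · have hz1 : -((k + 1) / k) < (N + 1) / N * ((k + 1) / k * x) := by
            have h1 := mul_lt_mul_of_pos_left (mul_lt_mul_of_pos_left hmx hpk1) hpN1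
            calc -((k + 1) / k) = (N + 1) / N * ((k + 1) / k * (-m)) := by
                  rw [hm]; field_simp
              _ < _ := h1
          simp only [fk]
          rw [if_neg (not_le.mpr hz0'), if_pos hz1, hGB x (by linarith) h0.le]
          field_simp
        · have hmx' : x ≤ -m := not_lt.mp hmx
          have hz1 : ¬(-((k + 1) / k) < (N + 1) / N * ((k + 1) / k * x)) := by
            push_neg
            have h1 := mul_le_mul_of_nonneg_left
              (mul_le_mul_of_nonneg_left hmx' hpk1.le) hpN1.le
            calc (N + 1) / N * ((k + 1) / k * x)
                ≤ (N + 1) / N * ((k + 1) / k * (-m)) := h1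
              _ = -((k + 1) / k) := by rw [hm]; field_simp
          simp only [fk]
          rw [if_neg (not_le.mpr hz0'), if_neg hz1, hGC x hb.le hmx']
          rw [hc]
          field_simp
      · -- x ≤ -1 : Fi x = x - 1/k
        have hb' : x ≤ -1 := not_lt.mp hb
        have e1 : (k + 1) / k * x ≤ x - 1 / k := by
          rw [div_mul_eq_mul_div, div_le_iff₀ hk]; nlinarith
        have e2 : x - 1 / k ≤ x := by linarith
        rw [max_eq_right e1, min_eq_right e2]
        have hz0 : x - 1 / k < 0 := by linarith
        have e3 : (N + 1) / N * (x - 1 / k) ≤ x - 1 / k := by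
          nlinarith [hz0, hgeN1]
        rw [min_eq_right e3]
        have hz0' : (N + 1) / N * (x - 1 / k) < 0 := mul_neg_of_pos_of_neg hpN1 hz0
        have hz1 : ¬(-((k + 1) / k) < (N + 1) / N * (x - 1 / k)) := by
          push_neg
          have h2 : x - 1 / k ≤ -((k + 1) / k) := by rw [hdiv]; linarith
          have h1 := mul_le_mul_of_nonneg_left h2 hpN1.le
          have h3 : (N + 1) / N * -((k + 1) / k) ≤ -((k + 1) / k) := by
            nlinarith [hpk1]
          linarith
        simp only [fk]
        rw [if_neg (not_le.mpr hz0'), if_neg hz1, hGD x hb']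
        rw [hc]
        field_simp
        ring
  -- basic facts about gd
  have hgd_meas : Measurable gd := by
    rw [hgd]
    apply Measurable.add
    apply Measurable.add measurable_const
    · exact Measurable.ite measurableSet_Iio measurable_const measurable_const
    · exact Measurable.ite measurableSet_Ico measurable_const measurable_const
  have hgd_one : ∀ x, 1 ≤ gd x := by
    intro x
    rw [hgd]
    simp only
    split_ifs <;> nlinarith
  have hgd_le : ∀ x, gd x ≤ 1 + 1 / N + c := by
    intro x
    rw [hgd]
    simp only
    split_ifs <;> nlinarith
  have hgd_bdd : ∀ x, ‖gd x‖ ≤ 1 + 1 / N + c := by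
    intro x
    rw [Real.norm_eq_abs, abs_of_pos (lt_of_lt_of_le one_pos (hgd_one x))]
    exact hgd_le x
  -- FTC
  have hftc : ∀ a b : ℝ, a < b → g b - g a = ∫ t in a..b, gd t := by
    intro a b hab
    rw [hgG a, hgG b]
    have hGcont : Continuous G := by
      rw [hG]
      exact (((continuous_id.add ((continuous_id.min continuous_const).div_const N)).add
        (continuous_const.mul (continuous_const.max
          (continuous_id.min continuous_const)))).add continuous_const)
    rw [intervalIntegral.integral_eq_sub_of_hasDeriv_right_of_le hab.le
      hGcont.continuousOn ?_
      (auxIntervalIntegrable hgd_meas hgd_bdd a b)]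
    intro x _
    rcases le_or_gt 0 x with h0 | h0
    · have hgdx : gd x = 1 := by
        rw [hgd]
        simp only
        rw [if_neg (not_lt.mpr h0), if_neg (by rintro ⟨-, h2⟩; linarith)]
        ring
      rw [hgdx]
      refine HasDerivWithinAt.congr_of_eventuallyEq
        ((auxLinDeriv 1 0 x).hasDerivWithinAt) ?_ (by rw [hGA x h0]; ring)
      filter_upwards [self_mem_nhdsWithin] with y hy
      rw [hGA y (le_trans h0 (le_of_lt hy))]
      ring
    · rcases le_or_gt (-m) x with hmx | hmx
      · have hgdx : gd x = 1 + 1 / N := by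
          rw [hgd]
          simp only
          rw [if_pos h0, if_neg (by rintro ⟨-, h2⟩; linarith)]
          ring
        rw [hgdx]
        refine HasDerivWithinAt.congr_of_eventuallyEq
          ((auxLinDeriv (1 + 1 / N) 0 x).hasDerivWithinAt) ?_
          (by rw [hGB x hmx h0.le]; ring)
        filter_upwards [Ioo_mem_nhdsGT_of_mem (⟨le_refl x, h0⟩ : x ∈ Set.Ico x 0)]
          with y hy
        rw [hGB y (by linarith [hy.1] : -m ≤ y) hy.2.le]
        ring
      · rcases le_or_gt (-1) x with h1x | h1x
        · have hgdx : gd x = 1 + 1 / N + c := by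
            rw [hgd]
            simp only
            rw [if_pos h0, if_pos ⟨h1x, hmx⟩]
          rw [hgdx]
          refine HasDerivWithinAt.congr_of_eventuallyEq
            ((auxLinDeriv (1 + 1 / N + c) (1 / k) x).hasDerivWithinAt) ?_
            (by rw [hGC x h1x hmx.le])
          filter_upwards [Ioo_mem_nhdsGT_of_mem
            (⟨le_refl x, hmx⟩ : x ∈ Set.Ico x (-m))] with y hy
          rw [hGC y (by linarith [hy.1] : (-1:ℝ) ≤ y) hy.2.le]
        · have hgdx : gd x = 1 + 1 / N := by
            rw [hgd]
            simp only
            rw [if_pos h0, if_neg (by rintro ⟨h1, -⟩; linarith)]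
            ring
          rw [hgdx]
          refine HasDerivWithinAt.congr_of_eventuallyEq
            ((auxLinDeriv (1 + 1 / N) (1 / k - c) x).hasDerivWithinAt) ?_
            (by rw [hGD x h1x.le])
          filter_upwards [Ioo_mem_nhdsGT_of_mem
            (⟨le_refl x, h1x⟩ : x ∈ Set.Ico x (-1))] with y hy
          rw [hGD y hy.2.le]
  -- log values
  have h1N : (0:ℝ) < 1 + 1 / N := by linarith
  have h1k : (0:ℝ) < 1 + 1 / k := by linarith
  have hlog1 : ∀ x, -m < x → x < 0 → Real.log (gd x) = Real.log (1 + 1 / N) := by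
    intro x hx1 hx2
    have hgdx : gd x = 1 + 1 / N := by
      rw [hgd]
      simp only
      rw [if_pos hx2, if_neg (by rintro ⟨-, h2⟩; linarith)]
      ring
    rw [hgdx]
  have hlog2 : ∀ x, -1 < x → x < -m →
      Real.log (gd x) = Real.log (1 + 1 / N) + Real.log (1 + 1 / k) := by
    intro x hx1 hx2
    have hgdx : gd x = (1 + 1 / N) * (1 + 1 / k) := by
      rw [hgd]
      simp only
      rw [if_pos (by linarith : x < 0), if_pos ⟨hx1.le, hx2⟩, hc]
      field_simp
    rw [hgdx, Real.log_mul h1N.ne' h1k.ne']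
  refine ⟨gd, ⟨auxLocallyIntegrable hgd_meas hgd_bdd, hftc⟩, hlog1, hlog2, ?_⟩
  -- BMO lower bound
  set u : ℝ → ℝ := fun x => Real.log (gd x) with hu
  set cL : ℝ := Real.log (1 + 1 / N) with hcL
  set L : ℝ := Real.log (1 + 1 / k) with hLdef
  have hL0 : 0 ≤ L := by rw [hLdef]; exact Real.log_nonneg (by linarith)
  set d : ℝ := 1 / (N + 1) with hd
  have hd0 : (0:ℝ) < d := by rw [hd]; positivity
  have hmd : m + d = 1 := by rw [hm, hd]; field_simp
  have hdm : d ≤ m := by rw [hd, hm, div_le_div_iff₀ hN1 hN1]; nlinarith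
  have hb0 : -m + d ≤ 0 := by linarith
  have hab : (-1 : ℝ) < -m + d := by linarith
  have hu_meas : Measurable u := Real.measurable_log.comp hgd_meas
  have hu_bdd : ∀ x, ‖u x‖ ≤ Real.log (1 + 1 / N + c) := by
    intro x
    rw [hu]
    simp only
    rw [Real.norm_eq_abs, abs_of_nonneg (Real.log_nonneg (hgd_one x))]
    exact Real.log_le_log (lt_of_lt_of_le one_pos (hgd_one x)) (hgd_le x)
  have hu_int : ∀ p q : ℝ, IntervalIntegrable u volume p q :=
    auxIntervalIntegrable hu_meas hu_bdd
  have hne1 : ∀ᵐ x : ℝ, x ≠ (-m : ℝ) := by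
    filter_upwards [compl_mem_ae_iff.mpr (measure_singleton (-m : ℝ))] with x hx
    simpa using hx
  have hne2 : ∀ᵐ x : ℝ, x ≠ (-m + d : ℝ) := by
    filter_upwards [compl_mem_ae_iff.mpr (measure_singleton (-m + d : ℝ))] with x hx
    simpa using hx
  have hval1 : ∀ᵐ x : ℝ, x ∈ Set.uIoc (-1 : ℝ) (-m) → u x = cL + L := by
    filter_upwards [hne1] with x hx hxmem
    rw [Set.uIoc_of_le (by linarith : (-1 : ℝ) ≤ -m)] at hxmem
    exact hlog2 x hxmem.1 (lt_of_le_of_ne hxmem.2 hx)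
  have hval2 : ∀ᵐ x : ℝ, x ∈ Set.uIoc (-m : ℝ) (-m + d) → u x = cL := by
    filter_upwards [hne2] with x hx hxmem
    rw [Set.uIoc_of_le (by linarith : (-m : ℝ) ≤ -m + d)] at hxmem
    exact hlog1 x hxmem.1 (lt_of_lt_of_le (lt_of_le_of_ne hxmem.2 hx) hb0)
  have hI1 : ∫ x in (-1 : ℝ)..(-m), u x = d * (cL + L) := by
    rw [intervalIntegral.integral_congr_ae hval1, intervalIntegral.integral_const]
    have : (-m : ℝ) - -1 = d := by linarith
    rw [this, smul_eq_mul]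
  have hI2 : ∫ x in (-m : ℝ)..(-m + d), u x = d * cL := by
    rw [intervalIntegral.integral_congr_ae hval2, intervalIntegral.integral_const]
    have : (-m + d : ℝ) - -m = d := by ring
    rw [this, smul_eq_mul]
  have hsum : ∫ x in (-1 : ℝ)..(-m + d), u x = d * (cL + L) + d * cL := by
    rw [← intervalIntegral.integral_add_adjacent_intervals
      (hu_int (-1) (-m)) (hu_int (-m) (-m + d)), hI1, hI2]
  have havg : intervalAvg u (-1) (-m + d) = cL + L / 2 := by
    rw [intervalAvg, hsum, smul_eq_mul]
    have h2d : (-m + d - -1 : ℝ) = 2 * d := by linarith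
    rw [h2d]
    field_simp
    ring
  -- the absolute deviation integral
  have hvv_int : ∀ p q : ℝ, IntervalIntegrable (fun x => ‖u x - (cL + L / 2)‖)
      volume p q := fun p q =>
    ((hu_int p q).sub (intervalIntegrable_const)).norm
  have hJ1 : ∫ x in (-1 : ℝ)..(-m), ‖u x - (cL + L / 2)‖ = d * (L / 2) := by
    have hcongr : ∀ᵐ x : ℝ, x ∈ Set.uIoc (-1 : ℝ) (-m) →
        ‖u x - (cL + L / 2)‖ = L / 2 := by
      filter_upwards [hval1] with x hx hxmem
      rw [hx hxmem]
      rw [Real.norm_eq_abs, show cL + L - (cL + L / 2) = L / 2 by ring,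
        abs_of_nonneg (by linarith)]
    rw [intervalIntegral.integral_congr_ae hcongr, intervalIntegral.integral_const]
    have : (-m : ℝ) - -1 = d := by linarith
    rw [this, smul_eq_mul]
  have hJ2 : ∫ x in (-m : ℝ)..(-m + d), ‖u x - (cL + L / 2)‖ = d * (L / 2) := by
    have hcongr : ∀ᵐ x : ℝ, x ∈ Set.uIoc (-m : ℝ) (-m + d) →
        ‖u x - (cL + L / 2)‖ = L / 2 := by
      filter_upwards [hval2] with x hx hxmem
      rw [hx hxmem]
      rw [Real.norm_eq_abs, show cL - (cL + L / 2) = -(L / 2) by ring, abs_neg,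
        abs_of_nonneg (by linarith)]
    rw [intervalIntegral.integral_congr_ae hcongr, intervalIntegral.integral_const]
    have : (-m + d : ℝ) - -m = d := by ring
    rw [this, smul_eq_mul]
  have hJ : ∫ x in (-1 : ℝ)..(-m + d), ‖u x - (cL + L / 2)‖ = d * L := by
    rw [← intervalIntegral.integral_add_adjacent_intervals
      (hvv_int (-1) (-m)) (hvv_int (-m) (-m + d)), hJ1, hJ2]
    ring
  rw [bmoSeminorm]
  refine le_trans ?_ (le_iSup_of_le (-1 : ℝ) (le_iSup_of_le (-m + d)
    (le_iSup_of_le hab le_rfl)))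
  apply le_of_eq
  congr 1
  rw [havg, hJ]
  have h2d : (-m + d - -1 : ℝ) = 2 * d := by linarith
  rw [h2d]
  field_simp
end

section
/- For every ε > 0 there exist a strongly quasisymmetric homeomorphism f of ℝ fixing 0 and 1 with 0 < ‖log f′‖_* < ε, a sequence (ℓ_n) of strongly quasisymmetric homeomorphisms of ℝ fixing 0 and 1 with ‖log ℓ_n′‖_* → 0 as n → ∞, and a constant c > 0 such that ‖log (f∘ℓ_n^{-1})′ − log f′‖_* ≥ c for all n. Consequently, the group of strongly quasisymmetric homeomorphisms, topologized via f ↦ log f′ with the BMO seminorm, is not a topological group. -/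
open MeasureTheory Set Filter Topology
open scoped ENNReal NNReal

/-!
Let `f` be piecewise linear with slope `e^a` on `[4, 5]` and `1` elsewhere, so that `log f'` is a
step of height `a` and `a / 2 ≤ ‖log f'‖_* ≤ a`. Let `ℓ_h` be piecewise linear with slopes `1 + h`
on `[4, 5]` and `1 - h` on `[5, 6]`; then `‖log ℓ_h'‖_* ≤ log (1 + h) - log (1 - h) ≤ 3h`. But
`ℓ_h` moves the breakpoint `5` of `f` to `5 + h`, and `f ∘ ℓ_h⁻¹` is again piecewise linear, with
slopes `e^a / (1 + h)` on `[4, 5 + h]` and `1 / (1 - h)` on `[5 + h, 6]`. On `(5, 5 + 2h)` the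
function `log (f ∘ ℓ_h⁻¹)' - log f'` is a step of height about `a`, so its BMO norm stays above
`a / 4` as `h → 0`. All these maps are locally absolutely continuous with derivatives bounded
between positive constants, hence `A₂`-weights.
-/

lemma MeasureTheory.LocallyIntegrable.intervalIntegrable {E : Type*} [NormedAddCommGroup E]
    {μ : Measure ℝ} [IsLocallyFiniteMeasure μ] {u : ℝ → E} (hu : LocallyIntegrable u μ)
    (a b : ℝ) : IntervalIntegrable u μ a b :=
  (hu.integrableOn_isCompact isCompact_uIcc).intervalIntegrable

lemma locallyIntegrable_of_mem_Icc {X : Type*} [MeasurableSpace X] [TopologicalSpace X]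
    {μ : Measure X} [IsLocallyFiniteMeasure μ] {u : X → ℝ} {m K : ℝ} (hu : Measurable u)
    (hb : ∀ x, u x ∈ Icc m K) : LocallyIntegrable u μ :=
  (locallyIntegrable_const (max |m| |K|)).mono hu.aestronglyMeasurable <| ae_of_all _ fun x => by
    simpa [Real.norm_eq_abs, abs_of_nonneg ((abs_nonneg m).trans (le_max_left _ _))] using
      abs_le_max_abs_abs (hb x).1 (hb x).2

section BoundedFunctions

variable {u : ℝ → ℝ} {m K : ℝ}

lemma inv_mul_integral_mem_Icc (hu : Measurable u) (hb : ∀ x, u x ∈ Icc m K) {a b : ℝ}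
    (hab : a < b) : (b - a)⁻¹ * ∫ x in a..b, u x ∈ Icc m K := by
  have hu_int := (locallyIntegrable_of_mem_Icc (μ := volume) hu hb).intervalIntegrable a b
  have hlen : 0 < b - a := sub_pos.2 hab
  have lower : m * (b - a) ≤ ∫ x in a..b, u x := by
    simpa [mul_comm] using intervalIntegral.integral_mono_on hab.le intervalIntegrable_const hu_int
      fun x _ => (hb x).1
  have upper : ∫ x in a..b, u x ≤ K * (b - a) := by
    simpa [mul_comm] using intervalIntegral.integral_mono_on hab.le hu_int intervalIntegrable_const
      fun x _ => (hb x).2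
  rw [inv_mul_eq_div]
  exact ⟨(le_div_iff₀ hlen).2 lower, (div_le_iff₀ hlen).2 upper⟩

lemma isAInftyWeight_of_mem_Icc (hu : Measurable u) (hm : 0 < m) (hb : ∀ x, u x ∈ Icc m K) :
    IsAInftyWeight u := by
  have hK : 0 < K := hm.trans_le ((hb 0).1.trans (hb 0).2)
  have hinv : ∀ x, 1 / u x ∈ Icc K⁻¹ m⁻¹ := fun x => by
    rw [one_div]
    exact ⟨inv_anti₀ (hm.trans_le (hb x).1) (hb x).2, inv_anti₀ hm (hb x).1⟩
  have hu_inv : Measurable fun x => 1 / u x := hu.const_div 1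
  refine ⟨2, one_lt_two, ?_⟩
  norm_num only [IsApWeight, Real.rpow_one]
  refine ⟨fun x => hm.le.trans (hb x).1, locallyIntegrable_of_mem_Icc hu hb,
    locallyIntegrable_of_mem_Icc hu_inv hinv, K / m,
    (one_le_div hm).2 ((hb 0).1.trans (hb 0).2), fun a b hab => ?_⟩
  have h₁ := inv_mul_integral_mem_Icc hu hb hab
  have h₂ := inv_mul_integral_mem_Icc hu_inv hinv hab
  calc _ ≤ K * m⁻¹ := mul_le_mul h₁.2 h₂.2 ((inv_pos.2 hK).le.trans h₂.1) hK.le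
    _ = K / m := (div_eq_mul_inv K m).symm

lemma bmoSeminorm_le_of_mem_Icc (hu : Measurable u) (hb : ∀ x, u x ∈ Icc m K) :
    bmoSeminorm u ≤ ENNReal.ofReal (K - m) := by
  refine iSup_le fun a => iSup_le fun b => iSup_le fun hab => ENNReal.ofReal_le_ofReal ?_
  have havg : intervalAvg u a b ∈ Icc m K := by
    simpa only [intervalAvg, smul_eq_mul] using inv_mul_integral_mem_Icc hu hb hab
  have hosc : ∀ x, ‖u x - intervalAvg u a b‖ ∈ Icc 0 (K - m) := fun x =>
    ⟨norm_nonneg _, abs_sub_le_iff.2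
      ⟨by linarith [(hb x).2, havg.1], by linarith [(hb x).1, havg.2]⟩⟩
  exact (inv_mul_integral_mem_Icc (hu.sub_const _).norm hosc hab).2

end BoundedFunctions

section TwoHalves

variable {w : ℝ → ℝ} {a b d₁ d₂ : ℝ}

lemma integral_eq_of_eqOn_halves (hab : a ≤ b)
    (h₁ : EqOn w (fun _ => d₁) (Ioo a ((a + b) / 2)))
    (h₂ : EqOn w (fun _ => d₂) (Ioo ((a + b) / 2) b)) :
    ∫ x in a..b, w x = (b - a) / 2 * (d₁ + d₂) := by
  have ham : a ≤ (a + b) / 2 := by linarith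
  have hmb : (a + b) / 2 ≤ b := by linarith
  have i₁ : IntervalIntegrable w volume a ((a + b) / 2) :=
    intervalIntegrable_const.congr_uIoo (by rw [uIoo_of_le ham]; exact h₁.symm)
  have i₂ : IntervalIntegrable w volume ((a + b) / 2) b :=
    intervalIntegrable_const.congr_uIoo (by rw [uIoo_of_le hmb]; exact h₂.symm)
  rw [← intervalIntegral.integral_add_adjacent_intervals i₁ i₂,
    intervalIntegral.integral_congr_Ioo_of_le ham h₁,
    intervalIntegral.integral_congr_Ioo_of_le hmb h₂,
    intervalIntegral.integral_const, intervalIntegral.integral_const, smul_eq_mul, smul_eq_mul]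
  ring

-- Whatever the mean `c` over `[a, b]`, the two halves contribute `|c₁ - c| + |c₂ - c| ≥ |c₁ - c₂|`.
lemma ofReal_abs_sub_div_two_le_bmoSeminorm {u : ℝ → ℝ} {c₁ c₂ : ℝ} (hab : a < b)
    (h₁ : EqOn u (fun _ => c₁) (Ioo a ((a + b) / 2)))
    (h₂ : EqOn u (fun _ => c₂) (Ioo ((a + b) / 2) b)) :
    ENNReal.ofReal (|c₁ - c₂| / 2) ≤ bmoSeminorm u := by
  set c := intervalAvg u a b
  have hosc : ∫ x in a..b, ‖u x - c‖ = (b - a) / 2 * (|c₁ - c| + |c₂ - c|) :=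
    integral_eq_of_eqOn_halves hab.le (fun x hx => by simp [h₁ hx]) (fun x hx => by simp [h₂ hx])
  refine le_trans ?_ (le_iSup₂_of_le a b (le_iSup_of_le hab le_rfl))
  refine ENNReal.ofReal_le_ofReal ?_
  rw [hosc, ← mul_assoc, inv_mul_eq_div, div_div_cancel_left' (sub_pos.2 hab).ne']
  have := abs_sub_le c₁ c c₂
  rw [abs_sub_comm c c₂] at this
  linarith

end TwoHalves

namespace IsLocAC

variable {F w : ℝ → ℝ} {m : ℝ}

lemma eq_add_integral (hF : IsLocAC F w) (x : ℝ) : F x = F 0 + ∫ t in 0..x, w t := by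
  rcases lt_trichotomy x 0 with hx | rfl | hx
  · rw [intervalIntegral.integral_symm, ← hF.2 x 0 hx]
    ring
  · simp
  · rw [← hF.2 0 x hx]
    ring

lemma continuous (hF : IsLocAC F w) : Continuous F := by
  rw [funext hF.eq_add_integral]
  exact continuous_const.add (intervalIntegral.continuous_primitive hF.1.intervalIntegrable 0)

lemma mul_sub_le_sub (hF : IsLocAC F w) (hw : ∀ x, m ≤ w x) {a b : ℝ} (hab : a ≤ b) :
    m * (b - a) ≤ F b - F a := by
  rcases hab.eq_or_lt with rfl | hab
  · simp
  rw [hF.2 a b hab]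
  simpa [mul_comm] using intervalIntegral.integral_mono_on hab.le intervalIntegrable_const
    (hF.1.intervalIntegrable a b) fun x _ => hw x

lemma strictMono (hF : IsLocAC F w) (hm : 0 < m) (hw : ∀ x, m ≤ w x) : StrictMono F :=
  fun _ _ hab => sub_pos.1 <| (mul_pos hm (sub_pos.2 hab)).trans_le (hF.mul_sub_le_sub hw hab.le)

lemma surjective (hF : IsLocAC F w) (hm : 0 < m) (hw : ∀ x, m ≤ w x) : Function.Surjective F := by
  refine hF.continuous.surjective
    (tendsto_atTop_mono' _ ?_ <| tendsto_atTop_add_const_left _ (F 0) <|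
      tendsto_id.const_mul_atTop hm)
    (tendsto_atBot_mono' _ ?_ <| tendsto_atBot_add_const_left _ (F 0) <|
      tendsto_id.const_mul_atBot hm)
  · filter_upwards [eventually_ge_atTop 0] with x hx
    have := hF.mul_sub_le_sub hw hx
    dsimp only [id]
    linarith
  · filter_upwards [eventually_le_atBot 0] with x hx
    have := hF.mul_sub_le_sub hw hx
    dsimp only [id]
    linarith

end IsLocAC

lemma isSQSWith_of_mem_Icc {F w : ℝ → ℝ} {m K : ℝ} (hF : IsLocAC F w) (hw : Measurable w)
    (hm : 0 < m) (hb : ∀ x, w x ∈ Icc m K) : IsSQSWith F w :=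
  ⟨hF.strictMono hm fun x => (hb x).1, hF.surjective hm fun x => (hb x).1, hF,
    isAInftyWeight_of_mem_Icc hw hm hb⟩

def ramp (A B x : ℝ) : ℝ := min (max x A) B - A

lemma ramp_sub_ramp (A B : ℝ) {a b : ℝ} (hab : a ≤ b) :
    ramp A B b - ramp A B a = ∫ x in a..b, (Ioc A B).indicator 1 x := by
  rw [intervalIntegral.integral_of_le hab, setIntegral_indicator measurableSet_Ioc,
    Pi.one_def, setIntegral_const, Ioc_inter_Ioc, Real.volume_real_Ioc, smul_eq_mul, mul_one]
  simp only [ramp, min_def, max_def]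
  split_ifs <;> linarith

lemma ramp_of_le {A B x : ℝ} (hAB : A ≤ B) (hx : x ≤ A) : ramp A B x = 0 := by
  simp [ramp, max_eq_right hx, hAB]

lemma ramp_of_mem_Icc {A B x : ℝ} (hx : x ∈ Icc A B) : ramp A B x = x - A := by
  simp [ramp, max_eq_left hx.1, hx.2]

lemma ramp_of_ge {A B x : ℝ} (hAB : A ≤ B) (hx : B ≤ x) : ramp A B x = B - A := by
  simp [ramp, max_eq_left (hAB.trans hx), hx]

def twoSlope (P M Q s₁ s₂ x : ℝ) : ℝ := x + (s₁ - 1) * ramp P M x + (s₂ - 1) * ramp M Q x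

noncomputable def twoSlopeDeriv (P M Q s₁ s₂ x : ℝ) : ℝ :=
  1 + (s₁ - 1) * (Ioc P M).indicator 1 x + (s₂ - 1) * (Ioc M Q).indicator 1 x

section TwoSlope

variable {P M Q s₁ s₂ : ℝ}

lemma twoSlopeDeriv_mem {S : Set ℝ} (h : 1 ∈ S) (h₁ : s₁ ∈ S) (h₂ : s₂ ∈ S) (x : ℝ) :
    twoSlopeDeriv P M Q s₁ s₂ x ∈ S := by
  by_cases hx₁ : x ∈ Ioc P M
  · have hx₂ : x ∉ Ioc M Q := fun hx₂ => hx₂.1.not_ge hx₁.2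
    simpa [twoSlopeDeriv, hx₁, hx₂] using h₁
  · by_cases hx₂ : x ∈ Ioc M Q <;> simpa [twoSlopeDeriv, hx₁, hx₂]

lemma twoSlopeDeriv_mem_Icc (x : ℝ) :
    twoSlopeDeriv P M Q s₁ s₂ x ∈ Icc (min 1 (min s₁ s₂)) (max 1 (max s₁ s₂)) :=
  twoSlopeDeriv_mem (by simp) (by simp) (by simp) x

lemma measurable_twoSlopeDeriv : Measurable (twoSlopeDeriv P M Q s₁ s₂) := by
  unfold twoSlopeDeriv
  measurability

lemma eqOn_twoSlopeDeriv_left : EqOn (twoSlopeDeriv P M Q s₁ s₂) (fun _ => s₁) (Ioo P M) :=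
  fun x hx => by
    have hx₂ : x ∉ Ioc M Q := fun hx₂ => hx₂.1.not_gt hx.2
    simp [twoSlopeDeriv, Ioo_subset_Ioc_self hx, hx₂]

lemma eqOn_twoSlopeDeriv_right : EqOn (twoSlopeDeriv P M Q s₁ s₂) (fun _ => s₂) (Ioo M Q) :=
  fun x hx => by
    have hx₁ : x ∉ Ioc P M := fun hx₁ => hx₁.2.not_gt hx.1
    simp [twoSlopeDeriv, Ioo_subset_Ioc_self hx, hx₁]

lemma isLocAC_twoSlope : IsLocAC (twoSlope P M Q s₁ s₂) (twoSlopeDeriv P M Q s₁ s₂) := by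
  have hI : ∀ A B a b : ℝ, IntervalIntegrable ((Ioc A B).indicator 1) volume a b := fun A B =>
    ((locallyIntegrable_const (1 : ℝ)).indicator measurableSet_Ioc).intervalIntegrable
  refine ⟨locallyIntegrable_of_mem_Icc measurable_twoSlopeDeriv twoSlopeDeriv_mem_Icc,
    fun a b hab => ?_⟩
  simp only [twoSlopeDeriv]
  rw [intervalIntegral.integral_add (intervalIntegrable_const.add ((hI P M a b).const_mul _))
      ((hI M Q a b).const_mul _),
    intervalIntegral.integral_add intervalIntegrable_const ((hI P M a b).const_mul _),
    intervalIntegral.integral_const_mul, intervalIntegral.integral_const_mul,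
    ← ramp_sub_ramp P M hab.le, ← ramp_sub_ramp M Q hab.le, intervalIntegral.integral_const,
    smul_eq_mul, twoSlope, twoSlope]
  ring

variable {x : ℝ}

lemma twoSlope_of_le (hPM : P ≤ M) (hMQ : M ≤ Q) (hx : x ≤ P) : twoSlope P M Q s₁ s₂ x = x := by
  simp [twoSlope, ramp_of_le hPM hx, ramp_of_le hMQ (hx.trans hPM)]

lemma twoSlope_of_mem_Icc_left (hMQ : M ≤ Q) (hx : x ∈ Icc P M) :
    twoSlope P M Q s₁ s₂ x = P + s₁ * (x - P) := by
  rw [twoSlope, ramp_of_mem_Icc hx, ramp_of_le hMQ hx.2]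
  ring

lemma twoSlope_of_mem_Icc_right (hPM : P ≤ M) (hx : x ∈ Icc M Q) :
    twoSlope P M Q s₁ s₂ x = P + s₁ * (M - P) + s₂ * (x - M) := by
  rw [twoSlope, ramp_of_ge hPM hx.1, ramp_of_mem_Icc hx]
  ring

lemma twoSlope_of_ge (hPM : P ≤ M) (hMQ : M ≤ Q) (hx : Q ≤ x) :
    twoSlope P M Q s₁ s₂ x = P + s₁ * (M - P) + s₂ * (Q - M) + (x - Q) := by
  rw [twoSlope, ramp_of_ge hPM (hMQ.trans hx), ramp_of_ge hMQ hx]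
  ring

-- The equations defining `r₁`, `r₂`, `M'`, `Q'` are hypotheses so that instances need no rewriting.
lemma twoSlope_twoSlope {t₁ t₂ r₁ r₂ M' Q' : ℝ} (hPM : P ≤ M) (hMQ : M ≤ Q)
    (hs₁ : 0 ≤ s₁) (hs₂ : 0 ≤ s₂) (hr₁ : t₁ * s₁ = r₁) (hr₂ : t₂ * s₂ = r₂)
    (hM' : P + s₁ * (M - P) = M') (hQ' : M' + s₂ * (Q - M) = Q') (x : ℝ) :
    twoSlope P M' Q' t₁ t₂ (twoSlope P M Q s₁ s₂ x) = twoSlope P M Q r₁ r₂ x := by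
  subst hr₁ hr₂ hM' hQ'
  have hPM' : P ≤ P + s₁ * (M - P) := by nlinarith
  have hMQ' : P + s₁ * (M - P) ≤ P + s₁ * (M - P) + s₂ * (Q - M) := by nlinarith
  rcases le_total x P with hxP | hPx
  · rw [twoSlope_of_le hPM hMQ hxP, twoSlope_of_le hPM' hMQ' hxP, twoSlope_of_le hPM hMQ hxP]
  rcases le_total x M with hxM | hMx
  · rw [twoSlope_of_mem_Icc_left hMQ ⟨hPx, hxM⟩, twoSlope_of_mem_Icc_left hMQ ⟨hPx, hxM⟩,
      twoSlope_of_mem_Icc_left hMQ' ⟨by nlinarith, by nlinarith⟩]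
    ring
  rcases le_total x Q with hxQ | hQx
  · rw [twoSlope_of_mem_Icc_right hPM ⟨hMx, hxQ⟩, twoSlope_of_mem_Icc_right hPM ⟨hMx, hxQ⟩,
      twoSlope_of_mem_Icc_right hPM' ⟨by nlinarith, by nlinarith⟩]
    ring
  · rw [twoSlope_of_ge hPM hMQ hQx, twoSlope_of_ge hPM hMQ hQx,
      twoSlope_of_ge hPM' hMQ' (by nlinarith)]
    ring

end TwoSlope

section TwoSlopeSQS

open Real

variable {P M Q s₁ s₂ : ℝ}

lemma isSQSWith_twoSlope (hs₁ : 0 < s₁) (hs₂ : 0 < s₂) :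
    IsSQSWith (twoSlope P M Q s₁ s₂) (twoSlopeDeriv P M Q s₁ s₂) :=
  isSQSWith_of_mem_Icc isLocAC_twoSlope measurable_twoSlopeDeriv
    (by positivity) twoSlopeDeriv_mem_Icc

lemma isLocAC_twoSlope_comp_invFun {r₁ r₂ M' Q' : ℝ} (hPM : P ≤ M) (hMQ : M ≤ Q)
    (hs₁ : 0 < s₁) (hs₂ : 0 < s₂) (hM' : P + s₁ * (M - P) = M') (hQ' : M' + s₂ * (Q - M) = Q') :
    IsLocAC (fun y => twoSlope P M Q r₁ r₂ (Function.invFun (twoSlope P M Q s₁ s₂) y))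
      (twoSlopeDeriv P M' Q' (r₁ / s₁) (r₂ / s₂)) := by
  have h_surj := (isSQSWith_twoSlope (P := P) (M := M) (Q := Q) hs₁ hs₂).2.1
  convert isLocAC_twoSlope (P := P) (M := M') (Q := Q') (s₁ := r₁ / s₁) (s₂ := r₂ / s₂) using 1
  funext y
  rw [← twoSlope_twoSlope hPM hMQ hs₁.le hs₂.le (div_mul_cancel₀ r₁ hs₁.ne')
    (div_mul_cancel₀ r₂ hs₂.ne') hM' hQ', Function.rightInverse_invFun h_surj y]

lemma bmoSeminorm_log_twoSlopeDeriv_le {m K : ℝ} (hm : 0 < m) (h : 1 ∈ Icc m K)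
    (h₁ : s₁ ∈ Icc m K) (h₂ : s₂ ∈ Icc m K) :
    bmoSeminorm (fun x => log (twoSlopeDeriv P M Q s₁ s₂ x)) ≤ ENNReal.ofReal (log K - log m) := by
  refine bmoSeminorm_le_of_mem_Icc (measurable_log.comp measurable_twoSlopeDeriv) fun x => ?_
  have hx := twoSlopeDeriv_mem (P := P) (M := M) (Q := Q) h h₁ h₂ x
  exact ⟨log_le_log hm hx.1, log_le_log (hm.trans_le hx.1) hx.2⟩

lemma log_one_add_sub_log_one_sub_le {h : ℝ} (h0 : 0 ≤ h) (h2 : h ≤ 1 / 2) :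
    log (1 + h) - log (1 - h) ≤ 3 * h := by
  have h_add := log_le_sub_one_of_pos (show 0 < 1 + h by linarith)
  have h_sub := one_sub_inv_le_log_of_pos (show 0 < 1 - h by linarith)
  have h_inv : (1 - h)⁻¹ ≤ 1 + 2 * h := by
    rw [inv_le_iff_one_le_mul₀ (by linarith)]
    nlinarith
  linarith

lemma bmoSeminorm_log_twoSlopeDeriv_one_add_one_sub_le {h : ℝ} (h0 : 0 ≤ h) (h2 : h ≤ 1 / 2) :
    bmoSeminorm (fun x => log (twoSlopeDeriv P M Q (1 + h) (1 - h) x)) ≤ ENNReal.ofReal (3 * h) :=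
  (bmoSeminorm_log_twoSlopeDeriv_le (by linarith) ⟨by linarith, by linarith⟩
    ⟨by linarith, le_rfl⟩ ⟨le_rfl, by linarith⟩).trans
    (ENNReal.ofReal_le_ofReal (log_one_add_sub_log_one_sub_le h0 h2))

lemma ofReal_le_bmoSeminorm_log_twoSlopeDeriv (hPQ : P < Q) (hM : M = (P + Q) / 2) :
    ENNReal.ofReal (|log s₁ - log s₂| / 2) ≤
      bmoSeminorm (fun x => log (twoSlopeDeriv P M Q s₁ s₂ x)) := by
  subst hM
  exact ofReal_abs_sub_div_two_le_bmoSeminorm hPQ (fun x hx => by simp [eqOn_twoSlopeDeriv_left hx])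
    (fun x hx => by simp [eqOn_twoSlopeDeriv_right hx])

end TwoSlopeSQS

open Real in
-- `log f'` is constant on `(5, 5 + 2h)`, while `log (f ∘ ℓ⁻¹)'` jumps there at `5 + h`
-- by `a - log ((1 + h) / (1 - h)) ≥ a / 2`.
lemma ofReal_div_four_le_bmoSeminorm_log_sub {a h : ℝ} (h0 : 0 < h) (hha : h ≤ a / 6)
    (h2 : h ≤ 1 / 2) :
    ENNReal.ofReal (a / 4) ≤ bmoSeminorm (fun x =>
      log (twoSlopeDeriv 4 (5 + h) 6 (exp a / (1 + h)) (1 / (1 - h)) x)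
        - log (twoSlopeDeriv 4 5 6 (exp a) 1 x)) := by
  have hmid : (5 + (5 + 2 * h)) / 2 = 5 + h := by ring
  have hf' : EqOn (twoSlopeDeriv 4 5 6 (exp a) 1) (fun _ => 1) (Ioo 5 (5 + 2 * h)) :=
    eqOn_twoSlopeDeriv_right.mono (Ioo_subset_Ioo_right (by linarith))
  refine le_trans ?_ (ofReal_abs_sub_div_two_le_bmoSeminorm (a := 5) (b := 5 + 2 * h)
    (c₁ := a - log (1 + h)) (c₂ := - log (1 - h)) (by linarith) ?_ ?_)
  · refine ENNReal.ofReal_le_ofReal ?_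
    have := log_one_add_sub_log_one_sub_le h0.le h2
    rw [le_div_iff₀ two_pos]
    refine le_trans ?_ (le_abs_self _)
    linarith
  · rw [hmid]
    intro x hx
    have hg : twoSlopeDeriv 4 (5 + h) 6 (exp a / (1 + h)) (1 / (1 - h)) x = exp a / (1 + h) :=
      eqOn_twoSlopeDeriv_left ⟨by linarith [hx.1], hx.2⟩
    dsimp only
    rw [hg, hf' ⟨hx.1, by linarith [hx.2]⟩, log_one, sub_zero,
      log_div (exp_pos a).ne' (by linarith), log_exp]
  · rw [hmid]
    intro x hx
    have hg : twoSlopeDeriv 4 (5 + h) 6 (exp a / (1 + h)) (1 / (1 - h)) x = 1 / (1 - h) :=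
      eqOn_twoSlopeDeriv_right ⟨hx.1, by linarith [hx.2]⟩
    dsimp only
    rw [hg, hf' ⟨by linarith [hx.1], hx.2⟩, log_one, sub_zero, one_div, log_inv]

/-- discontinuity of right translation: there are `f` with arbitrarily
small `0 < ‖log f'‖_*` and `ℓ_n → id` in `SQS` such that `log (f∘ℓ_n⁻¹)'` stays at
BMO-distance `≥ c` from `log f'`; hence `SQS` is not a topological group. -/
theorem statement12 :
    ∀ ε > (0:ℝ), ∃ f f' : ℝ → ℝ,
      IsSQSWith f f' ∧ f 0 = 0 ∧ f 1 = 1 ∧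
      0 < bmoSeminorm (fun x => Real.log (f' x)) ∧
      bmoSeminorm (fun x => Real.log (f' x)) < ENNReal.ofReal ε ∧
      ∃ ℓ ℓd : ℕ → ℝ → ℝ,
        (∀ n, IsSQSWith (ℓ n) (ℓd n) ∧ ℓ n 0 = 0 ∧ ℓ n 1 = 1) ∧
        Filter.Tendsto (fun n => bmoSeminorm (fun x => Real.log (ℓd n x)))
          Filter.atTop (nhds 0) ∧
        ∃ c > (0:ℝ), ∃ g : ℕ → ℝ → ℝ,
          ∀ n, IsLocAC (fun x => f (Function.invFun (ℓ n) x)) (g n) ∧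
            ENNReal.ofReal c
              ≤ bmoSeminorm (fun x => Real.log (g n x) - Real.log (f' x)) := by
  intro ε hε
  obtain ⟨a, ha, haε⟩ := exists_between (lt_min hε one_half_pos)
  obtain ⟨h, -, h_mem, h_lim⟩ := exists_seq_strictAnti_tendsto' (by positivity : 0 < a / 6)
  have h_small (n : ℕ) : 0 < h n ∧ h n ≤ a / 6 ∧ h n ≤ 1 / 2 :=
    ⟨(h_mem n).1, (h_mem n).2.le, by linarith [(h_mem n).2, min_le_right ε (1 / 2)]⟩
  have h_fix (s₁ s₂ : ℝ) : twoSlope 4 5 6 s₁ s₂ 0 = 0 ∧ twoSlope 4 5 6 s₁ s₂ 1 = 1 :=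
    ⟨twoSlope_of_le (by norm_num) (by norm_num) (by norm_num),
      twoSlope_of_le (by norm_num) (by norm_num) (by norm_num)⟩
  refine ⟨twoSlope 4 5 6 (Real.exp a) 1, twoSlopeDeriv 4 5 6 (Real.exp a) 1,
    isSQSWith_twoSlope (Real.exp_pos a) one_pos, (h_fix _ _).1, (h_fix _ _).2, ?_, ?_,
    fun n => twoSlope 4 5 6 (1 + h n) (1 - h n), fun n => twoSlopeDeriv 4 5 6 (1 + h n) (1 - h n),
    fun n => ⟨isSQSWith_twoSlope (by linarith [h_small n]) (by linarith [h_small n]), h_fix _ _⟩,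
    ?_, a / 4, by positivity,
    fun n => twoSlopeDeriv 4 (5 + h n) 6 (Real.exp a / (1 + h n)) (1 / (1 - h n)), fun n =>
      ⟨isLocAC_twoSlope_comp_invFun (by norm_num) (by norm_num) (by linarith [h_small n])
        (by linarith [h_small n]) (by ring) (by ring),
      ofReal_div_four_le_bmoSeminorm_log_sub (h_small n).1 (h_small n).2.1 (h_small n).2.2⟩⟩
  · refine lt_of_lt_of_le ?_ (ofReal_le_bmoSeminorm_log_twoSlopeDeriv (by norm_num) (by norm_num))
    simpa [abs_of_pos ha] using ha
  · refine lt_of_le_of_lt (bmoSeminorm_log_twoSlopeDeriv_le one_pos ⟨le_rfl, Real.one_le_exp ha.le⟩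
      ⟨Real.one_le_exp ha.le, le_rfl⟩ ⟨le_rfl, Real.one_le_exp ha.le⟩) ?_
    simpa [ENNReal.ofReal_lt_ofReal_iff hε] using haε.trans_le (min_le_left ε (1 / 2))
  · refine tendsto_of_tendsto_of_tendsto_of_le_of_le tendsto_const_nhds ?_ (fun _ => zero_le)
      fun n => bmoSeminorm_log_twoSlopeDeriv_one_add_one_sub_le (h_small n).1.le (h_small n).2.2
    simpa using ENNReal.tendsto_ofReal (h_lim.const_mul 3)
end
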